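/- arXiv:1408.4415 — 9 statements merged into one kernel-verified Lean document; each statement's English description precedes it below -/
import Mathlib

section
/- Let n ≥ 1 and let L : W_n → ℝ be a smooth function whose partial derivatives satisfy everywhere the symmetries ∂L/∂(w₂)_{ij} = ∂L/∂(w₂)_{ji}, ∂L/∂(w₃)_{ijk} = ∂L/∂(w₃)_{jik}, and ∂L/∂(w₄)_{ijkl} = ∂L/∂(w₄)_{jikl} = ∂L/∂(w₄)_{ijlk}. Suppose that L(Φ_{J,S,C}(w)) = L(w) for every admissible parameter triple (J, S, C) and every metric 2-jet w ∈ W_n. Then for every metric 2-jet w and every admissible triple (J, S, C): ∂L/∂(w₄)_{ijkl}(w) = Σ_{a,b,c,d} J i a · J j b · J k c · J l d · ∂L/∂(w₄)_{abcd}(Φ_{J,S,C}(w)); that is, the derivatives of L with respect to the second-derivative-of-metric variables transform as the components of a (4,0)-tensor. -/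
open Matrix

noncomputable section

namespace GeomActions

/-- Signature function: `ε 0 = −1`, `ε i = 1` for `i ≠ 0`. -/
def eps (n : ℕ) (i : Fin n) : ℝ := if (i : ℕ) = 0 then -1 else 1

/-- The Minkowski form `η = diag(−1, 1, …, 1)` of signature `(1, n−1)`. -/
def etaMat (n : ℕ) : Matrix (Fin n) (Fin n) ℝ := Matrix.diagonal (eps n)

/-- The space of (components of) 2-jets of metrics: triples `(w₂, w₃, w₄)` encoding
`(g_{ij}, g_{ij,k}, g_{ij,kl})` at a point in a chart. -/
abbrev W (n : ℕ) :=
  (Fin n → Fin n → ℝ) × (Fin n → Fin n → Fin n → ℝ) × (Fin n → Fin n → Fin n → Fin n → ℝ)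

/-- An admissible parameter triple `(J, S, C)` for a coordinate change:
`J` invertible, `S` symmetric in its last two indices, `C` symmetric in its last three. -/
structure Admissible (n : ℕ) (J : Matrix (Fin n) (Fin n) ℝ)
    (S : Fin n → Fin n → Fin n → ℝ) (C : Fin n → Fin n → Fin n → Fin n → ℝ) : Prop where
  hJ : IsUnit J
  hS : ∀ a i k, S a i k = S a k i
  hC1 : ∀ a i k l, C a i k l = C a k i l
  hC2 : ∀ a i k l, C a i k l = C a i l k

/-- Transformation rule `Φ_{J,S,C}` for the 2-jet of a metric under a coordinate change. -/
def Phi (n : ℕ) (J : Matrix (Fin n) (Fin n) ℝ) (S : Fin n → Fin n → Fin n → ℝ)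
    (C : Fin n → Fin n → Fin n → Fin n → ℝ) (w : W n) : W n :=
  ⟨fun i j => ∑ a, ∑ b, J a i * J b j * w.1 a b,
   fun i j k =>
     (∑ a, ∑ b, ∑ c, J a i * J b j * J c k * w.2.1 a b c) +
       ∑ a, ∑ b, (S a i k * J b j + J a i * S b j k) * w.1 a b,
   fun i j k l =>
     (∑ a, ∑ b, ∑ c, ∑ d, J a i * J b j * J c k * J d l * w.2.2 a b c d) +
     (∑ a, ∑ b, ∑ c,
       (S a i l * J b j * J c k + J a i * S b j l * J c k + J a i * J b j * S c k l +
         J c l * S a i k * J b j + J c l * J a i * S b j k) * w.2.1 a b c) +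
     ∑ a, ∑ b,
       (S a i k * S b j l + S a i l * S b j k + C a i k l * J b j + J a i * C b j k l) * w.1 a b⟩

/-- `w ∈ W n` is a metric 2-jet: `w₂` symmetric and congruent to `η`, and `w₃`, `w₄`
have the symmetries of derivatives of a metric. -/
def MetricJet (n : ℕ) (w : W n) : Prop :=
  (∀ i j, w.1 i j = w.1 j i) ∧
  (∃ P : Matrix (Fin n) (Fin n) ℝ, IsUnit P ∧ Pᵀ * Matrix.of w.1 * P = etaMat n) ∧
  (∀ i j k, w.2.1 i j k = w.2.1 j i k) ∧
  (∀ i j k l, w.2.2 i j k l = w.2.2 j i k l ∧ w.2.2 i j k l = w.2.2 i j l k)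

/-- The symmetries `w i j k l = w j i k l = w i j l k` of the second-derivative variables. -/
def SymW4 (n : ℕ) (w : Fin n → Fin n → Fin n → Fin n → ℝ) : Prop :=
  ∀ i j k l, w i j k l = w j i k l ∧ w i j k l = w i j l k

/-- Symmetry under all permutations of the last three arguments. -/
def Sym3Last (n : ℕ) (c : Fin n → Fin n → Fin n → Fin n → ℝ) : Prop :=
  ∀ i j k l, c i j k l = c i k j l ∧ c i j k l = c i j l k

/-- The scalar curvature at a point, in Lorentz normal coordinates where
`g_{ij} = η i j`, `g_{ij,k} = 0`, `g_{ij,kl} = w4 i j k l`. -/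
def Rform (n : ℕ) (w4 : Fin n → Fin n → Fin n → Fin n → ℝ) : ℝ :=
  ∑ i, ∑ j, eps n i * eps n j * (w4 i j i j - w4 i i j j)

/-- The contravariant Ricci tensor at a point, in Lorentz normal coordinates. -/
def Ricform (n : ℕ) (w4 : Fin n → Fin n → Fin n → Fin n → ℝ) (i j : Fin n) : ℝ :=
  (1 / 2) * eps n i * eps n j *
    ∑ k, eps n k * (w4 i k j k + w4 j k i k - w4 i j k k - w4 k k i j)

/-- The space of 2-jets of a metric together with 1-jets `(D_I, D_{I,j})` of a
type-(0,m) tensor field. -/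
abbrev Y (n m : ℕ) :=
  W n × ((Fin m → Fin n) → ℝ) × ((Fin m → Fin n) → Fin n → ℝ)

/-- Transformation rule `Ψ_{J,S,C}` for the pair (metric 2-jet, matter field 1-jet). -/
def Psi (n m : ℕ) (J : Matrix (Fin n) (Fin n) ℝ) (S : Fin n → Fin n → Fin n → ℝ)
    (C : Fin n → Fin n → Fin n → Fin n → ℝ) (p : Y n m) : Y n m :=
  ⟨Phi n J S C p.1,
   fun I => ∑ A : Fin m → Fin n, (∏ r, J (A r) (I r)) * p.2.1 A,
   fun I j =>
     (∑ A : Fin m → Fin n, ∑ b, (∏ r, J (A r) (I r)) * J b j * p.2.2 A b) +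
     ∑ r : Fin m, ∑ A : Fin m → Fin n,
       S (A r) (I r) j * (∏ s ∈ Finset.univ.erase r, J (A s) (I s)) * p.2.1 A⟩

/-- The full antisymmetrisation `Alt y′` of the rank-(m+1) tensor
`z I = y′ (I ∘ castSucc) (I (last m))` determined by the derivative variables `y′`. -/
def altD (n m : ℕ) (y' : (Fin m → Fin n) → Fin n → ℝ) (I : Fin (m + 1) → Fin n) : ℝ :=
  (1 / (Nat.factorial (m + 1) : ℝ)) *
    ∑ σ : Equiv.Perm (Fin (m + 1)),
      ((Equiv.Perm.sign σ : ℤ) : ℝ) *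
        y' (fun r => I (σ (Fin.castSucc r))) (I (σ (Fin.last m)))

/-- Lorentz matrices: `Aᵀ * η * A = η`. -/
def IsLorentz (n : ℕ) (A : Matrix (Fin n) (Fin n) ℝ) : Prop :=
  Aᵀ * etaMat n * A = etaMat n

/-- Lorentz invariance of a rank-2 tensor. -/
def LorentzInv2 (n : ℕ) (b : Fin n → Fin n → ℝ) : Prop :=
  ∀ A : Matrix (Fin n) (Fin n) ℝ, IsLorentz n A →
    ∀ i j, b i j = ∑ p, ∑ q, A i p * A j q * b p q

/-- Lorentz invariance of a rank-4 tensor. -/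
def LorentzInv4 (n : ℕ) (a : Fin n → Fin n → Fin n → Fin n → ℝ) : Prop :=
  ∀ A : Matrix (Fin n) (Fin n) ℝ, IsLorentz n A →
    ∀ i j k l, a i j k l = ∑ p, ∑ q, ∑ r, ∑ s, A i p * A j q * A k r * A l s * a p q r s

/-- Lorentz invariance of a rank-6 tensor. -/
def LorentzInv6 (n : ℕ) (a : Fin n → Fin n → Fin n → Fin n → Fin n → Fin n → ℝ) : Prop :=
  ∀ A : Matrix (Fin n) (Fin n) ℝ, IsLorentz n A →
    ∀ i j k l m p, a i j k l m p =
      ∑ a₁, ∑ a₂, ∑ a₃, ∑ a₄, ∑ a₅, ∑ a₆,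
        A i a₁ * A j a₂ * A k a₃ * A l a₄ * A m a₅ * A p a₆ * a a₁ a₂ a₃ a₄ a₅ a₆

/-- Lorentz invariance of a rank-k tensor indexed by `Fin k → Fin n`. -/
def LorentzInvT (n k : ℕ) (T : (Fin k → Fin n) → ℝ) : Prop :=
  ∀ A : Matrix (Fin n) (Fin n) ℝ, IsLorentz n A →
    ∀ I : Fin k → Fin n, T I = ∑ J : Fin k → Fin n, (∏ r, A (I r) (J r)) * T J

/-- Number of occurrences of `v` among `(i, j, k, l)`. -/
def cnt4 (n : ℕ) (i j k l v : Fin n) : ℕ :=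
  (if i = v then 1 else 0) + (if j = v then 1 else 0) + (if k = v then 1 else 0) +
    (if l = v then 1 else 0)

/-- Coordinate direction in the `w₂`-variables. -/
def e2 (n : ℕ) (i j : Fin n) : W n :=
  ⟨fun a b => if a = i ∧ b = j then 1 else 0, 0, 0⟩

/-- Coordinate direction in the `w₃`-variables. -/
def e3 (n : ℕ) (i j k : Fin n) : W n :=
  ⟨0, fun a b c => if a = i ∧ b = j ∧ c = k then 1 else 0, 0⟩

/-- Coordinate direction in the `w₄`-variables. -/
def e4 (n : ℕ) (i j k l : Fin n) : W n :=
  ⟨0, 0, fun a b c d => if a = i ∧ b = j ∧ c = k ∧ d = l then 1 else 0⟩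

/-- Coordinate direction in the `y′`-variables. -/
def eY' (n m : ℕ) (I : Fin m → Fin n) (j : Fin n) : Y n m :=
  ⟨0, 0, fun A b => if A = I ∧ b = j then 1 else 0⟩

/-- The domain `W_n`: 2-jets whose `w₂`-component is an invertible matrix. -/
def Wdom (n : ℕ) : Set (W n) := {w | IsUnit (Matrix.of w.1)}

/-- The domain `Y`: points whose metric-jet component lies in `W_n`. -/
def Ydom (n m : ℕ) : Set (Y n m) := {p | IsUnit (Matrix.of p.1.1)}


lemma sum_delta4 (n : ℕ) (f : Fin n → Fin n → Fin n → Fin n → ℝ) (i j k l : Fin n) :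
    (∑ a, ∑ b, ∑ c, ∑ d, f a b c d * (if a = i ∧ b = j ∧ c = k ∧ d = l then (1:ℝ) else 0))
      = f i j k l := by
  simp [ite_and, mul_ite, Finset.sum_ite_eq]

lemma sum_delta4' (n : ℕ) (f : Fin n → Fin n → Fin n → Fin n → ℝ) (i j k l : Fin n) :
    (∑ p, ∑ q, ∑ r, ∑ s, f p q r s * (if i = p ∧ j = q ∧ k = r ∧ l = s then (1:ℝ) else 0))
      = f i j k l := by
  simp [ite_and, mul_ite, Finset.sum_ite_eq']

lemma wdom_open (n : ℕ) : IsOpen (Wdom n) := by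
  have h : Wdom n = (fun w : W n => (Matrix.of w.1).det) ⁻¹' {(0:ℝ)}ᶜ := by
    ext w
    simp [Wdom, Matrix.isUnit_iff_isUnit_det, isUnit_iff_ne_zero]
  rw [h]
  exact (Continuous.matrix_det continuous_fst).isOpen_preimage _ isOpen_compl_singleton

lemma eta_det_ne (n : ℕ) : (etaMat n).det ≠ 0 := by
  rw [etaMat, Matrix.det_diagonal]
  refine Finset.prod_ne_zero_iff.2 fun i _ => ?_
  unfold eps; split <;> norm_num

lemma jet_mem_Wdom (n : ℕ) (w : W n) (hw : MetricJet n w) : w ∈ Wdom n := by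
  obtain ⟨-, ⟨P, hP, hPe⟩, -, -⟩ := hw
  rw [Wdom, Set.mem_setOf_eq, Matrix.isUnit_iff_isUnit_det, isUnit_iff_ne_zero]
  have hd := congrArg Matrix.det hPe
  rw [Matrix.det_mul, Matrix.det_mul, Matrix.det_transpose] at hd
  intro h0
  rw [h0, mul_zero, zero_mul] at hd
  exact eta_det_ne n hd.symm

lemma phi_fst (n : ℕ) (J : Matrix (Fin n) (Fin n) ℝ) (S : Fin n → Fin n → Fin n → ℝ)
    (C : Fin n → Fin n → Fin n → Fin n → ℝ) (w : W n) :
    Matrix.of (Phi n J S C w).1 = Jᵀ * Matrix.of w.1 * J := by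
  ext i j
  simp only [Phi, Matrix.mul_apply, Matrix.transpose_apply, Matrix.of_apply, Finset.sum_mul]
  rw [Finset.sum_comm]
  exact Finset.sum_congr rfl fun b _ => Finset.sum_congr rfl fun a _ => by ring

lemma phi_mem (n : ℕ) (J : Matrix (Fin n) (Fin n) ℝ) (S : Fin n → Fin n → Fin n → ℝ)
    (C : Fin n → Fin n → Fin n → Fin n → ℝ) (w : W n) (hw : w ∈ Wdom n) (hJ : IsUnit J) :
    Phi n J S C w ∈ Wdom n := by
  rw [Wdom, Set.mem_setOf_eq, phi_fst]
  have hJt : IsUnit Jᵀ := by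
    rw [Matrix.isUnit_iff_isUnit_det, Matrix.det_transpose, ← Matrix.isUnit_iff_isUnit_det]
    exact hJ
  exact (hJt.mul hw).mul hJ

theorem statement3 (n : ℕ) (hn : 1 ≤ n) (L : W n → ℝ)
    (hL : ContDiffOn ℝ (⊤ : ℕ∞) L (Wdom n))
    (hsym2 : ∀ w ∈ Wdom n, ∀ i j : Fin n,
      fderiv ℝ L w (e2 n i j) = fderiv ℝ L w (e2 n j i))
    (hsym3 : ∀ w ∈ Wdom n, ∀ i j k : Fin n,
      fderiv ℝ L w (e3 n i j k) = fderiv ℝ L w (e3 n j i k))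
    (hsym4 : ∀ w ∈ Wdom n, ∀ i j k l : Fin n,
      fderiv ℝ L w (e4 n i j k l) = fderiv ℝ L w (e4 n j i k l) ∧
      fderiv ℝ L w (e4 n i j k l) = fderiv ℝ L w (e4 n i j l k))
    (hinv : ∀ (J : Matrix (Fin n) (Fin n) ℝ) (S : Fin n → Fin n → Fin n → ℝ)
      (C : Fin n → Fin n → Fin n → Fin n → ℝ), Admissible n J S C →
      ∀ w : W n, MetricJet n w → L (Phi n J S C w) = L w) :
    ∀ w : W n, MetricJet n w →
      ∀ (J : Matrix (Fin n) (Fin n) ℝ) (S : Fin n → Fin n → Fin n → ℝ)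
        (C : Fin n → Fin n → Fin n → Fin n → ℝ), Admissible n J S C →
        ∀ i j k l, fderiv ℝ L w (e4 n i j k l) =
          ∑ a, ∑ b, ∑ c, ∑ d, J i a * J j b * J k c * J l d *
            fderiv ℝ L (Phi n J S C w) (e4 n a b c d) := by
  intro w hw J S C hA i j k l
  classical
  -- the symmetrised direction in the w₄-variables
  set v4 : Fin n → Fin n → Fin n → Fin n → ℝ := fun a b c d =>
    (if a = i ∧ b = j ∧ c = k ∧ d = l then (1:ℝ) else 0) +
    (if a = j ∧ b = i ∧ c = k ∧ d = l then (1:ℝ) else 0) +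
    (if a = i ∧ b = j ∧ c = l ∧ d = k then (1:ℝ) else 0) +
    (if a = j ∧ b = i ∧ c = l ∧ d = k then (1:ℝ) else 0) with hv4
  set v : W n := ⟨0, 0, v4⟩ with hv
  set u4 : Fin n → Fin n → Fin n → Fin n → ℝ := fun p q r s =>
    J i p * J j q * J k r * J l s + J j p * J i q * J k r * J l s +
    J i p * J j q * J l r * J k s + J j p * J i q * J l r * J k s with hu4
  set u : W n := ⟨0, 0, u4⟩ with hu
  have hvsplit : v = e4 n i j k l + e4 n j i k l + e4 n i j l k + e4 n j i l k := by
    refine Prod.ext ?_ (Prod.ext ?_ ?_)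
    · funext a b; simp [hv, e4]
    · funext a b c; simp [hv, e4]
    · funext a b c d; simp [hv, hv4, e4]
  have h1 : ∀ t : ℝ, (w + t • v).1 = w.1 := by
    intro t; funext a b; simp [hv]
  have h2 : ∀ t : ℝ, (w + t • v).2.1 = w.2.1 := by
    intro t; funext a b c; simp [hv]
  have h3 : ∀ (t : ℝ) a b c d, (w + t • v).2.2 a b c d = w.2.2 a b c d + t * v4 a b c d := by
    intro t a b c d; simp [hv]
  -- the key affine identity
  have key : ∀ t : ℝ, Phi n J S C (w + t • v) = Phi n J S C w + t • u := by
    intro t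
    refine Prod.ext ?_ (Prod.ext ?_ ?_)
    · funext p q
      simp only [Phi, Prod.fst_add, Prod.smul_fst, Pi.add_apply, Pi.smul_apply, smul_eq_mul,
        h1, hu, Pi.zero_apply, mul_zero, add_zero]
    · funext p q r
      simp only [Phi, Prod.snd_add, Prod.smul_snd, Prod.fst_add, Prod.smul_fst, Pi.add_apply,
        Pi.smul_apply, smul_eq_mul, h1, h2, hu, hv, Prod.snd_zero, Pi.zero_apply, mul_zero, add_zero]
    · funext p q r s
      have base : ∀ (i' j' k' l' : Fin n),
          (∑ a, ∑ b, ∑ c, ∑ d, J a p * J b q * J c r * J d s *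
            (if a = i' ∧ b = j' ∧ c = k' ∧ d = l' then (1:ℝ) else 0))
          = J i' p * J j' q * J k' r * J l' s := fun i' j' k' l' =>
        sum_delta4 n (fun a b c d => J a p * J b q * J c r * J d s) i' j' k' l'
      have hv4sum : (∑ a, ∑ b, ∑ c, ∑ d, J a p * J b q * J c r * J d s * v4 a b c d)
          = u4 p q r s := by
        simp only [hv4, mul_add, Finset.sum_add_distrib]
        rw [base i j k l, base j i k l, base i j l k, base j i l k, hu4]
      have hpull : (∑ a, ∑ b, ∑ c, ∑ d, J a p * J b q * J c r * J d s * (t * v4 a b c d))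
          = t * ∑ a, ∑ b, ∑ c, ∑ d, J a p * J b q * J c r * J d s * v4 a b c d := by
        simp only [Finset.mul_sum]
        exact Finset.sum_congr rfl fun a _ => Finset.sum_congr rfl fun b _ =>
          Finset.sum_congr rfl fun c _ => Finset.sum_congr rfl fun d _ => by ring
      have hsum : (∑ a, ∑ b, ∑ c, ∑ d, J a p * J b q * J c r * J d s *
            (w.2.2 a b c d + t * v4 a b c d))
          = (∑ a, ∑ b, ∑ c, ∑ d, J a p * J b q * J c r * J d s * w.2.2 a b c d)
            + t * u4 p q r s := by
        simp only [mul_add, Finset.sum_add_distrib]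
        rw [hpull, hv4sum]
      have hR : (Phi n J S C w + t • u).2.2 p q r s
          = (Phi n J S C w).2.2 p q r s + t * u4 p q r s := by
        simp [hu]
      rw [hR]
      simp only [Phi, h1, h2, h3]
      rw [hsum]
      ring
  -- the perturbed point stays a metric 2-jet
  have hjet : ∀ t : ℝ, MetricJet n (w + t • v) := by
    intro t
    obtain ⟨hs2, ⟨P, hP, hPe⟩, hs3, hs4⟩ := hw
    refine ⟨?_, ⟨P, hP, ?_⟩, ?_, ?_⟩
    · intro a b; rw [h1 t]; exact hs2 a b
    · rw [h1 t]; exact hPe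
    · intro a b c; rw [h2 t]; exact hs3 a b c
    · intro a b c d
      constructor
      · rw [h3 t a b c d, h3 t b a c d, (hs4 a b c d).1]
        have t1 : (if a = i ∧ b = j ∧ c = k ∧ d = l then (1:ℝ) else 0)
            = (if b = j ∧ a = i ∧ c = k ∧ d = l then (1:ℝ) else 0) := if_congr (by tauto) rfl rfl
        have t2 : (if a = j ∧ b = i ∧ c = k ∧ d = l then (1:ℝ) else 0)
            = (if b = i ∧ a = j ∧ c = k ∧ d = l then (1:ℝ) else 0) := if_congr (by tauto) rfl rfl
        have t3 : (if a = i ∧ b = j ∧ c = l ∧ d = k then (1:ℝ) else 0)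
            = (if b = j ∧ a = i ∧ c = l ∧ d = k then (1:ℝ) else 0) := if_congr (by tauto) rfl rfl
        have t4 : (if a = j ∧ b = i ∧ c = l ∧ d = k then (1:ℝ) else 0)
            = (if b = i ∧ a = j ∧ c = l ∧ d = k then (1:ℝ) else 0) := if_congr (by tauto) rfl rfl
        simp only [hv4]
        rw [t1, t2, t3, t4]
        ring
      · rw [h3 t a b c d, h3 t a b d c, (hs4 a b c d).2]
        have t1 : (if a = i ∧ b = j ∧ c = k ∧ d = l then (1:ℝ) else 0)
            = (if a = i ∧ b = j ∧ d = l ∧ c = k then (1:ℝ) else 0) := if_congr (by tauto) rfl rfl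
        have t2 : (if a = j ∧ b = i ∧ c = k ∧ d = l then (1:ℝ) else 0)
            = (if a = j ∧ b = i ∧ d = l ∧ c = k then (1:ℝ) else 0) := if_congr (by tauto) rfl rfl
        have t3 : (if a = i ∧ b = j ∧ c = l ∧ d = k then (1:ℝ) else 0)
            = (if a = i ∧ b = j ∧ d = k ∧ c = l then (1:ℝ) else 0) := if_congr (by tauto) rfl rfl
        have t4 : (if a = j ∧ b = i ∧ c = l ∧ d = k then (1:ℝ) else 0)
            = (if a = j ∧ b = i ∧ d = k ∧ c = l then (1:ℝ) else 0) := if_congr (by tauto) rfl rfl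
        simp only [hv4]
        rw [t1, t2, t3, t4]
        ring
  -- differentiability
  have hopen := wdom_open n
  have hwd : w ∈ Wdom n := jet_mem_Wdom n w hw
  have hpd : Phi n J S C w ∈ Wdom n := phi_mem n J S C w hwd hA.hJ
  have hdiff : ∀ x ∈ Wdom n, DifferentiableAt ℝ L x := fun x hx =>
    (hL.differentiableOn (by simp)).differentiableAt (hopen.mem_nhds hx)
  have hgv : HasDerivAt (fun t : ℝ => w + t • v) v 0 := by
    simpa using ((hasDerivAt_id (0:ℝ)).smul_const v).const_add w
  have hgu : HasDerivAt (fun t : ℝ => Phi n J S C w + t • u) u 0 := by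
    simpa using ((hasDerivAt_id (0:ℝ)).smul_const u).const_add (Phi n J S C w)
  have hF : HasDerivAt (fun t : ℝ => L (w + t • v)) (fderiv ℝ L w v) 0 := by
    have hL' : HasFDerivAt L (fderiv ℝ L w) ((fun t : ℝ => w + t • v) 0) := by
      simpa using (hdiff w hwd).hasFDerivAt
    exact hL'.comp_hasDerivAt 0 hgv
  have hG : HasDerivAt (fun t : ℝ => L (Phi n J S C w + t • u))
      (fderiv ℝ L (Phi n J S C w) u) 0 := by
    have hL' : HasFDerivAt L (fderiv ℝ L (Phi n J S C w))
        ((fun t : ℝ => Phi n J S C w + t • u) 0) := by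
      simpa using (hdiff _ hpd).hasFDerivAt
    exact hL'.comp_hasDerivAt 0 hgu
  have hFG : (fun t : ℝ => L (w + t • v)) = fun t : ℝ => L (Phi n J S C w + t • u) := by
    funext t
    rw [← key t, hinv J S C hA (w + t • v) (hjet t)]
  have hder : fderiv ℝ L w v = fderiv ℝ L (Phi n J S C w) u :=
    hF.unique (hFG ▸ hG)
  -- compute the left-hand side
  have hLHS : fderiv ℝ L w v = 4 * fderiv ℝ L w (e4 n i j k l) := by
    rw [hvsplit]
    simp only [map_add]
    have e2' : fderiv ℝ L w (e4 n j i k l) = fderiv ℝ L w (e4 n i j k l) :=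
      ((hsym4 w hwd i j k l).1).symm
    have e3' : fderiv ℝ L w (e4 n i j l k) = fderiv ℝ L w (e4 n i j k l) :=
      ((hsym4 w hwd i j k l).2).symm
    have e4' : fderiv ℝ L w (e4 n j i l k) = fderiv ℝ L w (e4 n i j k l) := by
      rw [← (hsym4 w hwd j i k l).2, ← (hsym4 w hwd i j k l).1]
    rw [e2', e3', e4']
    ring
  -- express u as a combination of coordinate directions
  have husplit : u = ∑ p, ∑ q, ∑ r, ∑ s, u4 p q r s • e4 n p q r s := by
    refine Prod.ext ?_ (Prod.ext ?_ ?_)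
    · simp [hu, e4, Prod.fst_sum]
    · simp [hu, e4, Prod.fst_sum, Prod.snd_sum]
    · funext a b c d
      rw [hu]
      show u4 a b c d = _
      simp only [Prod.snd_sum, Prod.smul_snd, Finset.sum_apply, Pi.smul_apply, e4,
        smul_eq_mul]
      exact (sum_delta4' n u4 a b c d).symm
  have hu_lin : fderiv ℝ L (Phi n J S C w) u
      = ∑ p, ∑ q, ∑ r, ∑ s, u4 p q r s * fderiv ℝ L (Phi n J S C w) (e4 n p q r s) := by
    rw [husplit]
    simp [map_sum, smul_eq_mul]
  -- reindexing identities for the right-hand side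
  have hswap12 : (∑ p, ∑ q, ∑ r, ∑ s,
        J j p * J i q * J k r * J l s * fderiv ℝ L (Phi n J S C w) (e4 n p q r s))
      = ∑ p, ∑ q, ∑ r, ∑ s,
        J i p * J j q * J k r * J l s * fderiv ℝ L (Phi n J S C w) (e4 n p q r s) := by
    rw [Finset.sum_comm]
    refine Finset.sum_congr rfl fun p _ => Finset.sum_congr rfl fun q _ =>
      Finset.sum_congr rfl fun r _ => Finset.sum_congr rfl fun s _ => ?_
    rw [← (hsym4 _ hpd p q r s).1]
    ring
  have hswap34 : (∑ p, ∑ q, ∑ r, ∑ s,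
        J i p * J j q * J l r * J k s * fderiv ℝ L (Phi n J S C w) (e4 n p q r s))
      = ∑ p, ∑ q, ∑ r, ∑ s,
        J i p * J j q * J k r * J l s * fderiv ℝ L (Phi n J S C w) (e4 n p q r s) := by
    refine Finset.sum_congr rfl fun p _ => Finset.sum_congr rfl fun q _ => ?_
    rw [Finset.sum_comm]
    refine Finset.sum_congr rfl fun r _ => Finset.sum_congr rfl fun s _ => ?_
    rw [← (hsym4 _ hpd p q r s).2]
    ring
  have hswapboth : (∑ p, ∑ q, ∑ r, ∑ s,
        J j p * J i q * J l r * J k s * fderiv ℝ L (Phi n J S C w) (e4 n p q r s))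
      = ∑ p, ∑ q, ∑ r, ∑ s,
        J i p * J j q * J k r * J l s * fderiv ℝ L (Phi n J S C w) (e4 n p q r s) := by
    rw [Finset.sum_comm]
    refine Finset.sum_congr rfl fun p _ => Finset.sum_congr rfl fun q _ => ?_
    rw [Finset.sum_comm]
    refine Finset.sum_congr rfl fun r _ => Finset.sum_congr rfl fun s _ => ?_
    rw [← (hsym4 _ hpd p q s r).1, ← (hsym4 _ hpd p q r s).2]
    ring
  have hRHS : fderiv ℝ L (Phi n J S C w) u
      = 4 * ∑ p, ∑ q, ∑ r, ∑ s,
        J i p * J j q * J k r * J l s * fderiv ℝ L (Phi n J S C w) (e4 n p q r s) := by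
    rw [hu_lin]
    simp only [hu4, add_mul, Finset.sum_add_distrib]
    rw [hswap12, hswap34, hswapboth]
    ring
  have hfin : 4 * fderiv ℝ L w (e4 n i j k l)
      = 4 * ∑ p, ∑ q, ∑ r, ∑ s,
        J i p * J j q * J k r * J l s * fderiv ℝ L (Phi n J S C w) (e4 n p q r s) := by
    rw [← hLHS, ← hRHS]; exact hder
  have := mul_left_cancel₀ (by norm_num : (4:ℝ) ≠ 0) hfin
  exact this


end GeomActions
end
end

section
/- Let n, m ≥ 1 and let L : Y → ℝ be smooth. Suppose that L(Ψ_{J,S,C}(p)) = L(p) for every admissible parameter triple (J, S, C) and every point p = (w, y, y′) ∈ Y whose first component w is a metric 2-jet. Then for every such point p and every admissible triple (J, S, C): ∂L/∂(y′)_{I j}(p) = Σ_{A : Fin m → Fin n} Σ_{b : Fin n} (∏_{r : Fin m} J (I r) (A r)) · J j b · ∂L/∂(y′)_{A b}(Ψ_{J,S,C}(p)); that is, the derivatives of L with respect to the matter-field-derivative variables transform as the components of an (m+1, 0)-tensor. -/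
open Matrix

noncomputable section

namespace GeomActions

lemma isOpen_Ydom (n m : ℕ) : IsOpen (Ydom n m) := by
  have h : Ydom n m = (fun p : Y n m => (Matrix.of p.1.1).det) ⁻¹' {(0:ℝ)}ᶜ := by
    ext p
    simp [Ydom, Matrix.isUnit_iff_isUnit_det, isUnit_iff_ne_zero]
  rw [h]
  exact isOpen_compl_singleton.preimage (Continuous.matrix_det continuous_fst.fst)

lemma metricJet_mem (n m : ℕ) (p : Y n m) (hp : MetricJet n p.1) : p ∈ Ydom n m := by
  obtain ⟨_, ⟨P, hP, hPe⟩, _⟩ := hp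
  rw [Ydom, Set.mem_setOf_eq, Matrix.isUnit_iff_isUnit_det, isUnit_iff_ne_zero]
  intro h
  have h2 := congrArg Matrix.det hPe
  rw [Matrix.det_mul, Matrix.det_mul, h] at h2
  exact eta_det_ne n (by linarith)

lemma psi_mem (n m : ℕ) (J : Matrix (Fin n) (Fin n) ℝ) (S : Fin n → Fin n → Fin n → ℝ)
    (C : Fin n → Fin n → Fin n → Fin n → ℝ) (hJ : IsUnit J) (p : Y n m)
    (hp : p ∈ Ydom n m) : Psi n m J S C p ∈ Ydom n m := by
  have h1 : Matrix.of (Psi n m J S C p).1.1 = Jᵀ * Matrix.of p.1.1 * J := phi_fst n J S C p.1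
  rw [Ydom, Set.mem_setOf_eq, h1]
  have hJ' : IsUnit Jᵀ := by
    rw [Matrix.isUnit_iff_isUnit_det, Matrix.det_transpose, ← Matrix.isUnit_iff_isUnit_det]
    exact hJ
  exact (hJ'.mul hp).mul hJ

theorem statement4 (n m : ℕ) (hn : 1 ≤ n) (hm : 1 ≤ m) (L : Y n m → ℝ)
    (hL : ContDiffOn ℝ (⊤ : ℕ∞) L (Ydom n m))
    (hinv : ∀ (J : Matrix (Fin n) (Fin n) ℝ) (S : Fin n → Fin n → Fin n → ℝ)
      (C : Fin n → Fin n → Fin n → Fin n → ℝ), Admissible n J S C →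
      ∀ p : Y n m, MetricJet n p.1 → L (Psi n m J S C p) = L p) :
    ∀ p : Y n m, MetricJet n p.1 →
      ∀ (J : Matrix (Fin n) (Fin n) ℝ) (S : Fin n → Fin n → Fin n → ℝ)
        (C : Fin n → Fin n → Fin n → Fin n → ℝ), Admissible n J S C →
        ∀ (I : Fin m → Fin n) (j : Fin n),
          fderiv ℝ L p (eY' n m I j) =
            ∑ A : Fin m → Fin n, ∑ b,
              (∏ r, J (I r) (A r)) * J j b * fderiv ℝ L (Psi n m J S C p) (eY' n m A b) := by
  intro p hp J S C hadm I j
  -- differentiability facts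
  have hpY : p ∈ Ydom n m := metricJet_mem n m p hp
  have hqY : Psi n m J S C p ∈ Ydom n m := psi_mem n m J S C hadm.hJ p hpY
  have hdLp : DifferentiableAt ℝ L p :=
    (hL.contDiffAt ((isOpen_Ydom n m).mem_nhds hpY)).differentiableAt (by simp)
  have hdLq : DifferentiableAt ℝ L (Psi n m J S C p) :=
    (hL.contDiffAt ((isOpen_Ydom n m).mem_nhds hqY)).differentiableAt (by simp)
  -- the linear map T on the y'-variables
  have Tlin : IsLinearMap ℝ (fun z : (Fin m → Fin n) → Fin n → ℝ =>
      (fun I' j' => ∑ A : Fin m → Fin n, ∑ b,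
        (∏ r, J (A r) (I' r)) * J b j' * z A b : (Fin m → Fin n) → Fin n → ℝ)) := by
    constructor
    · intro x y; funext I' j'
      simp [mul_add, Finset.sum_add_distrib]
    · intro c x; funext I' j'
      simp only [Pi.smul_apply, smul_eq_mul, Finset.mul_sum]
      exact Finset.sum_congr rfl fun A _ => Finset.sum_congr rfl fun b _ => by ring
  set T : ((Fin m → Fin n) → Fin n → ℝ) →L[ℝ] ((Fin m → Fin n) → Fin n → ℝ) :=
    LinearMap.toContinuousLinearMap (IsLinearMap.mk' _ Tlin) with hT
  have hTapp : ∀ z I' j', T z I' j' =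
      ∑ A : Fin m → Fin n, ∑ b, (∏ r, J (A r) (I' r)) * J b j' * z A b := by
    intro z I' j'; rw [hT]; simp
  set TC : ((Fin m → Fin n) → Fin n → ℝ) →L[ℝ] Y n m :=
    (0 : ((Fin m → Fin n) → Fin n → ℝ) →L[ℝ] W n).prod
      ((0 : ((Fin m → Fin n) → Fin n → ℝ) →L[ℝ] ((Fin m → Fin n) → ℝ)).prod T) with hTC
  set ι : ((Fin m → Fin n) → Fin n → ℝ) →L[ℝ] Y n m :=
    (0 : ((Fin m → Fin n) → Fin n → ℝ) →L[ℝ] W n).prod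
      ((0 : ((Fin m → Fin n) → Fin n → ℝ) →L[ℝ] ((Fin m → Fin n) → ℝ)).prod
        (ContinuousLinearMap.id ℝ _)) with hι
  set k : Y n m := Psi n m J S C (p.1, p.2.1, 0) with hk
  -- the affine structure of Psi restricted to the y'-slice
  have hB : ∀ z, Psi n m J S C (p.1, p.2.1, z) = k + TC z := by
    intro z
    refine Prod.ext ?_ (Prod.ext ?_ ?_)
    · simp [hk, hTC, Psi]
    · simp [hk, hTC, Psi]
    · funext I' j'
      simp only [hk, hTC, Psi, ContinuousLinearMap.prod_apply, Pi.add_apply, Prod.snd_add,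
        ContinuousLinearMap.zero_apply, hTapp z I' j']
      simp only [Pi.zero_apply, mul_zero, Finset.sum_const_zero, zero_add]
      ring
  have hA : ∀ z : (Fin m → Fin n) → Fin n → ℝ,
      ((p.1, p.2.1, z) : Y n m) = ((p.1, p.2.1, 0) : Y n m) + ι z := by
    intro z
    refine Prod.ext ?_ (Prod.ext ?_ ?_)
    · simp [hι]
    · simp [hι]
    · simp [hι]
  -- derivatives of the two compositions
  have hdB : HasFDerivAt (fun z => Psi n m J S C (p.1, p.2.1, z)) TC p.2.2 := by
    have : (fun z => Psi n m J S C (p.1, p.2.1, z)) = (fun z => k + TC z) := funext hB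
    rw [this]
    exact (TC.hasFDerivAt).const_add k
  have hdA : HasFDerivAt (fun z : (Fin m → Fin n) → Fin n → ℝ =>
      ((p.1, p.2.1, z) : Y n m)) ι p.2.2 := by
    have : (fun z : (Fin m → Fin n) → Fin n → ℝ => ((p.1, p.2.1, z) : Y n m)) =
        (fun z => ((p.1, p.2.1, 0) : Y n m) + ι z) := funext hA
    rw [this]
    exact (ι.hasFDerivAt).const_add _
  have hBq : Psi n m J S C (p.1, p.2.1, p.2.2) = Psi n m J S C p := rfl
  have hF : HasFDerivAt (fun z0 => L (Psi n m J S C (p.1, p.2.1, z0)))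
      ((fderiv ℝ L (Psi n m J S C p)).comp TC) p.2.2 := by
    exact HasFDerivAt.comp p.2.2 hdLq.hasFDerivAt hdB
  have hG : HasFDerivAt (fun z0 => L ((p.1, p.2.1, z0) : Y n m))
      ((fderiv ℝ L p).comp ι) p.2.2 := by
    have hpe : ((p.1, p.2.1, p.2.2) : Y n m) = p := rfl
    exact (hpe ▸ hdLp.hasFDerivAt).comp p.2.2 hdA
  -- invariance identity along the slice
  have hFG : (fun z0 => L (Psi n m J S C (p.1, p.2.1, z0))) =
      (fun z0 => L ((p.1, p.2.1, z0) : Y n m)) := by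
    funext z0
    exact hinv J S C hadm (p.1, p.2.1, z0) hp
  have heq : (fderiv ℝ L (Psi n m J S C p)).comp TC = (fderiv ℝ L p).comp ι :=
    hF.unique (hFG ▸ hG)
  -- evaluate at the coordinate direction
  set δ : (Fin m → Fin n) → Fin n → ℝ := fun A b => if A = I ∧ b = j then 1 else 0 with hδ
  have heval := congrFun (congrArg (fun (f : _ →L[ℝ] ℝ) => (f : _ → ℝ)) heq) δ
  simp only [ContinuousLinearMap.comp_apply] at heval
  have hιδ : ι δ = eY' n m I j := by
    refine Prod.ext ?_ (Prod.ext ?_ ?_) <;> simp [hι, eY', hδ]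
  have hTδ : TC δ = ∑ A : Fin m → Fin n, ∑ b,
      ((∏ r, J (I r) (A r)) * J j b) • eY' n m A b := by
    refine Prod.ext ?_ (Prod.ext ?_ ?_)
    · simp [hTC, eY', Prod.fst_sum]
    · simp [hTC, eY', Prod.fst_sum, Prod.snd_sum]
    · funext A' b'
      simp only [hTC, ContinuousLinearMap.prod_apply, Prod.snd_sum, Finset.sum_apply,
        Prod.smul_snd, Pi.smul_apply, eY', smul_eq_mul, hTapp δ A' b']
      simp [hδ, Finset.sum_ite_eq, Finset.sum_ite_eq', ite_and, mul_ite, mul_comm]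
  calc fderiv ℝ L p (eY' n m I j) = fderiv ℝ L p (ι δ) := by rw [hιδ]
    _ = fderiv ℝ L (Psi n m J S C p) (TC δ) := heval.symm
    _ = ∑ A : Fin m → Fin n, ∑ b,
        (∏ r, J (I r) (A r)) * J j b * fderiv ℝ L (Psi n m J S C p) (eY' n m A b) := by
      rw [hTδ]
      rw [map_sum]
      refine Finset.sum_congr rfl fun A _ => ?_
      rw [map_sum]
      exact Finset.sum_congr rfl fun b _ => by rw [_root_.map_smul]; simp

end GeomActions
end
end

section
/- Let n ≥ 2 and let a : Fin n → Fin n → Fin n → Fin n → ℝ satisfy: (i) a i j k l = a j i k l = a i j l k for all indices; (ii) the cyclic identity a i j k l + a i l j k + a i k j l = 0 for all indices; (iii) a is Lorentz-invariant as a rank-4 tensor. Then there exists λ ∈ ℝ such that for every w : Fin n → Fin n → Fin n → Fin n → ℝ with w i j k l = w j i k l = w i j l k: Σ_{i,j,k,l} a i j k l · w i j k l = λ · Σ_{i,j} ε i · ε j · (w i j i j − w i i j j). -/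
open Matrix

noncomputable section

namespace GeomActions

section Aux
variable {n : ℕ}

lemma sum_single' (f : Fin n → ℝ) (z : Fin n) (h : ∀ x, x ≠ z → f x = 0) :
    ∑ x, f x = f z :=
  Finset.sum_eq_single_of_mem z (Finset.mem_univ z) (fun x _ hx => h x hx)

lemma sum_pair' (f : Fin n → ℝ) (z w : Fin n) (hzw : z ≠ w)
    (h : ∀ x, x ≠ z → x ≠ w → f x = 0) : ∑ x, f x = f z + f w := by
  have h1 : ∑ x ∈ ({z, w} : Finset (Fin n)), f x = ∑ x, f x := by
    refine Finset.sum_subset (Finset.subset_univ _) ?_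
    intro x _ hx
    simp only [Finset.mem_insert, Finset.mem_singleton] at hx
    push_neg at hx
    exact h x hx.1 hx.2
  rw [← h1, Finset.sum_pair hzw]

lemma flip_inv (a : Fin n → Fin n → Fin n → Fin n → ℝ) (hlor : LorentzInv4 n a)
    (v i j k l : Fin n) :
    a i j k l = (if i = v then -1 else 1) * (if j = v then -1 else 1) *
      (if k = v then -1 else 1) * (if l = v then -1 else 1) * a i j k l := by
  set s : Fin n → ℝ := fun x => if x = v then -1 else 1 with hs
  have hL : IsLorentz n (Matrix.diagonal s) := by
    unfold IsLorentz etaMat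
    rw [Matrix.diagonal_transpose, Matrix.diagonal_mul_diagonal,
      Matrix.diagonal_mul_diagonal]
    refine congrArg Matrix.diagonal ?_
    funext x
    by_cases hx : x = v <;> simp [hs, hx]
  have h := hlor _ hL i j k l
  simp only [Matrix.diagonal_apply, ite_mul, zero_mul, mul_ite, mul_zero,
    Finset.sum_ite_eq, Finset.mem_univ, if_true] at h
  by_cases h1 : i = v <;> by_cases h2 : j = v <;> by_cases h3 : k = v <;>
    by_cases h4 : l = v <;> simp [h1, h2, h3, h4, hs] at h ⊢ <;> linarith

lemma perm_inv (a : Fin n → Fin n → Fin n → Fin n → ℝ) (hlor : LorentzInv4 n a)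
    (σ : Equiv.Perm (Fin n)) (hσ : ∀ x, eps n (σ x) = eps n x) (i j k l : Fin n) :
    a (σ i) (σ j) (σ k) (σ l) = a i j k l := by
  set A : Matrix (Fin n) (Fin n) ℝ :=
    Matrix.of (fun x y => if σ.symm x = y then (1:ℝ) else 0) with hA
  have hL : IsLorentz n A := by
    unfold IsLorentz etaMat
    ext p q
    simp only [Matrix.mul_apply, Matrix.transpose_apply, Matrix.diagonal_apply,
      hA, Matrix.of_apply, Equiv.symm_apply_eq, ite_mul, mul_ite, zero_mul,
      mul_zero, one_mul, mul_one, Finset.sum_ite_eq, Finset.sum_ite_eq',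
      Finset.mem_univ, if_true]
    by_cases hpq : p = q
    · simp [hpq, hσ]
    · have h2 : σ p ≠ σ q := fun h => hpq (σ.injective h)
      rw [if_neg hpq, if_neg (Ne.symm h2)]
  have h := hlor A hL (σ i) (σ j) (σ k) (σ l)
  simpa only [hA, Matrix.of_apply, Equiv.symm_apply_apply, ite_mul, zero_mul,
    one_mul, Finset.sum_ite_irrel, Finset.sum_const_zero, Finset.sum_ite_eq,
    Finset.mem_univ, if_true] using h

lemma boost_inv (a : Fin n → Fin n → Fin n → Fin n → ℝ) (hlor : LorentzInv4 n a)
    (i0 u m : Fin n) (hi0 : (i0 : ℕ) = 0) (hu : u ≠ i0) (hm0 : m ≠ i0) (hmu : m ≠ u)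
    (hv1 : a i0 m u m = 0) (hv2 : a u m i0 m = 0) :
    a i0 m i0 m = - a u m u m := by
  set r : ℝ := Real.sqrt 2 with hrdef
  have hr : r * r = 2 := Real.mul_self_sqrt (by norm_num)
  have heps0 : eps n i0 = -1 := by simp [eps, hi0]
  have hepsu : eps n u = 1 := by
    have : (u : ℕ) ≠ 0 := fun h => hu (Fin.ext (h.trans hi0.symm))
    simp [eps, this]
  set A : Matrix (Fin n) (Fin n) ℝ := Matrix.of (fun x y =>
    if x = i0 ∧ y = i0 then r else if x = i0 ∧ y = u then 1 else
    if x = u ∧ y = i0 then 1 else if x = u ∧ y = u then r else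
    if x = y then 1 else 0) with hA
  have hu' : i0 ≠ u := Ne.symm hu
  -- entry lemmas
  have hA00 : A i0 i0 = r := by simp [hA]
  have hA0u : A i0 u = 1 := by simp [hA, hu, hu']
  have hAu0 : A u i0 = 1 := by simp [hA, hu]
  have hAuu : A u u = r := by simp [hA, hu]
  have hA0gen : ∀ y, y ≠ i0 → y ≠ u → A i0 y = 0 := by
    intro y h1 h2; simp [hA, h1, h2, hu, hu', Ne.symm h1, Ne.symm h2]
  have hAugen : ∀ y, y ≠ i0 → y ≠ u → A u y = 0 := by
    intro y h1 h2; simp [hA, h1, h2, hu, hu', Ne.symm h1, Ne.symm h2]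
  have hAgen : ∀ x y, x ≠ i0 → x ≠ u → A x y = if x = y then 1 else 0 := by
    intro x y h1 h2; simp [hA, h1, h2]
  have hAm : ∀ y, A m y = if m = y then 1 else 0 := fun y => hAgen m y hm0 hmu
  have hAm1 : A m m = 1 := by rw [hAm]; simp
  have hAm0 : ∀ y, y ≠ m → A m y = 0 := by
    intro y hy; rw [hAm, if_neg (Ne.symm hy)]
  have hL : IsLorentz n A := by
    unfold IsLorentz etaMat
    ext p q
    have hentry : (Aᵀ * Matrix.diagonal (eps n) * A) p q
        = ∑ y, A y p * eps n y * A y q := by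
      simp only [Matrix.mul_apply, Matrix.transpose_apply, Matrix.diagonal_apply,
        mul_ite, mul_zero, ite_mul, zero_mul, Finset.sum_ite_eq, Finset.sum_ite_eq',
        Finset.mem_univ, if_true]
    rw [hentry, Matrix.diagonal_apply]
    by_cases hp0 : p = i0
    · rw [hp0]
      by_cases hq0 : q = i0
      · rw [hq0]
        rw [sum_pair' (fun x => A x i0 * eps n x * A x i0) i0 u hu'
          (fun x h1 h2 => by simp [hAgen x i0 h1 h2, h1])]
        simp only [hA00, hAu0, heps0, hepsu]
        first | rw [if_pos rfl] | rw [if_true]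
        linear_combination -hr
      · by_cases hqu : q = u
        · rw [hqu]
          rw [sum_pair' (fun x => A x i0 * eps n x * A x u) i0 u hu'
            (fun x h1 h2 => by simp [hAgen x i0 h1 h2, h1])]
          simp only [hA00, hA0u, hAu0, hAuu, heps0, hepsu]
          rw [if_neg hu']; ring
        · rw [sum_single' (fun x => A x i0 * eps n x * A x q) q
            (fun x hx => by
              by_cases hx0 : x = i0
              · subst hx0; simp [hA0gen q hq0 hqu]
              · by_cases hxu : x = u
                · subst hxu; simp [hAugen q hq0 hqu]
                · simp [hAgen x q hx0 hxu, hAgen x i0 hx0 hxu, hx, hx0])]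
          have hq0' : ¬ (i0 = q) := fun h => hq0 h.symm
          simp [hAgen q i0 hq0 hqu, hq0, hq0']
    · by_cases hpu : p = u
      · rw [hpu]
        by_cases hq0 : q = i0
        · rw [hq0]
          rw [sum_pair' (fun x => A x u * eps n x * A x i0) i0 u hu'
            (fun x h1 h2 => by simp [hAgen x u h1 h2, h2])]
          simp only [hA00, hA0u, hAu0, hAuu, heps0, hepsu]
          rw [if_neg hu]; ring
        · by_cases hqu : q = u
          · rw [hqu]
            rw [sum_pair' (fun x => A x u * eps n x * A x u) i0 u hu'
              (fun x h1 h2 => by simp [hAgen x u h1 h2, h2])]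
            simp only [hA0u, hAuu, heps0, hepsu]
            first | rw [if_pos rfl] | rw [if_true]
            linear_combination hr
          · rw [sum_single' (fun x => A x u * eps n x * A x q) q
              (fun x hx => by
                by_cases hx0 : x = i0
                · subst hx0; simp [hA0gen q hq0 hqu]
                · by_cases hxu : x = u
                  · subst hxu; simp [hAugen q hq0 hqu]
                  · simp [hAgen x q hx0 hxu, hAgen x u hx0 hxu, hx, hxu])]
            have hqu' : ¬ (u = q) := fun h => hqu h.symm
            simp [hAgen q u hq0 hqu, hqu, hqu']
      · rw [sum_single' (fun x => A x p * eps n x * A x q) p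
          (fun x hx => by
            by_cases hx0 : x = i0
            · subst hx0; simp [hA0gen p hp0 hpu]
            · by_cases hxu : x = u
              · subst hxu; simp [hAugen p hp0 hpu]
              · simp [hAgen x p hx0 hxu, hx])]
        by_cases hpq : p = q
        · subst hpq; simp [hAgen p p hp0 hpu]
        · simp [hAgen p q hp0 hpu, hAgen p p hp0 hpu, hpq]
  -- now the invariance computation
  have h := hlor A hL i0 m i0 m
  have e1 : (∑ p, ∑ q, ∑ r', ∑ s, A i0 p * A m q * A i0 r' * A m s * a p q r' s)
      = ∑ p, ∑ q, ∑ r', A i0 p * A m q * A i0 r' * A m m * a p q r' m :=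
    Finset.sum_congr rfl fun p _ => Finset.sum_congr rfl fun q _ =>
      Finset.sum_congr rfl fun r' _ =>
        sum_single' _ m fun x hx => by rw [hAm0 x hx]; ring
  have e2 : (∑ p, ∑ q, ∑ r', A i0 p * A m q * A i0 r' * A m m * a p q r' m)
      = ∑ p, ∑ q, (A i0 p * A m q * A i0 i0 * A m m * a p q i0 m
          + A i0 p * A m q * A i0 u * A m m * a p q u m) :=
    Finset.sum_congr rfl fun p _ => Finset.sum_congr rfl fun q _ =>
      sum_pair' _ i0 u hu' fun x h1 h2 => by rw [hA0gen x h1 h2]; ring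
  have e3 : (∑ p, ∑ q, (A i0 p * A m q * A i0 i0 * A m m * a p q i0 m
          + A i0 p * A m q * A i0 u * A m m * a p q u m))
      = ∑ p, (A i0 p * A m m * A i0 i0 * A m m * a p m i0 m
          + A i0 p * A m m * A i0 u * A m m * a p m u m) :=
    Finset.sum_congr rfl fun p _ =>
      sum_single' _ m fun x hx => by rw [hAm0 x hx]; ring
  have e4 : (∑ p, (A i0 p * A m m * A i0 i0 * A m m * a p m i0 m
          + A i0 p * A m m * A i0 u * A m m * a p m u m))
      = (A i0 i0 * A m m * A i0 i0 * A m m * a i0 m i0 m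
          + A i0 i0 * A m m * A i0 u * A m m * a i0 m u m)
        + (A i0 u * A m m * A i0 i0 * A m m * a u m i0 m
          + A i0 u * A m m * A i0 u * A m m * a u m u m) :=
    sum_pair' _ i0 u hu' fun x h1 h2 => by rw [hA0gen x h1 h2]; ring
  rw [e1, e2, e3, e4, hA00, hA0u, hAm1, hv1, hv2] at h
  linear_combination -h - a i0 m i0 m * hr


lemma vanish_v (a : Fin n → Fin n → Fin n → Fin n → ℝ) (hlor : LorentzInv4 n a)
    (v i j k l : Fin n)
    (hodd : (if i = v then (-1:ℝ) else 1) * (if j = v then -1 else 1) *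
      (if k = v then -1 else 1) * (if l = v then -1 else 1) = -1) :
    a i j k l = 0 := by
  have h := flip_inv a hlor v i j k l
  rw [hodd] at h
  linarith

end Aux

theorem statement5 (n : ℕ) (hn : 2 ≤ n) (a : Fin n → Fin n → Fin n → Fin n → ℝ)
    (hsym : ∀ i j k l, a i j k l = a j i k l ∧ a i j k l = a i j l k)
    (hcyc : ∀ i j k l, a i j k l + a i l j k + a i k j l = 0)
    (hlor : LorentzInv4 n a) :
    ∃ lam : ℝ, ∀ w : Fin n → Fin n → Fin n → Fin n → ℝ, SymW4 n w →
      (∑ i, ∑ j, ∑ k, ∑ l, a i j k l * w i j k l) =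
        lam * ∑ i, ∑ j, eps n i * eps n j * (w i j i j - w i i j j) := by
  classical
  have h0 : 0 < n := by omega
  have h1 : 1 < n := by omega
  set i0 : Fin n := ⟨0, h0⟩ with hi0def
  set i1 : Fin n := ⟨1, h1⟩ with hi1def
  have hi0 : (i0 : ℕ) = 0 := rfl
  have hne10 : i1 ≠ i0 := by
    rw [hi0def, hi1def]
    exact Fin.ne_of_val_ne (by norm_num)
  have heps0 : eps n i0 = -1 := by simp [eps, hi0]
  have hepsne : ∀ x : Fin n, x ≠ i0 → eps n x = 1 := by
    intro x hx
    have hx' : (x : ℕ) ≠ 0 := fun h => hx (Fin.ext (h.trans hi0.symm))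
    simp [eps, hx']
  have eps_sq : ∀ x : Fin n, eps n x * eps n x = 1 := by
    intro x
    by_cases hx : x = i0
    · rw [hx, heps0]; norm_num
    · rw [hepsne x hx]; norm_num
  set c : ℝ := a i0 i1 i0 i1 with hc
  -- vanishing lemmas (odd occurrence of some index value)
  have van1 : ∀ i j k l : Fin n, j ≠ i → k ≠ i → l ≠ i → a i j k l = 0 := by
    intro i j k l h2 h3 h4
    exact vanish_v a hlor i i j k l
      (by rw [if_pos rfl, if_neg h2, if_neg h3, if_neg h4]; norm_num)
  have van2 : ∀ i j k l : Fin n, i ≠ j → k ≠ j → l ≠ j → a i j k l = 0 := by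
    intro i j k l h2 h3 h4
    exact vanish_v a hlor j i j k l
      (by rw [if_pos rfl, if_neg h2, if_neg h3, if_neg h4]; norm_num)
  -- diagonal and cyclic consequences
  have hdiag : ∀ i, a i i i i = 0 := by
    intro i; have := hcyc i i i i; linarith
  have hpq : ∀ i k, a i i k k = -2 * a i k i k := by
    intro i k; have := hcyc i i k k; linarith
  have qsymm : ∀ i j, a j i j i = a i j i j := by
    intro i j
    exact ((hsym j i j i).1).trans ((hsym i j j i).2)
  -- q-values
  have hq0 : ∀ j, j ≠ i0 → a i0 j i0 j = c := by
    intro j hj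
    by_cases hj1 : j = i1
    · rw [hj1, hc]
    · have h01 : i0 ≠ i1 := Ne.symm hne10
      have h0j : i0 ≠ j := Ne.symm hj
      have hσ0 : Equiv.swap i1 j i0 = i0 :=
        Equiv.swap_apply_of_ne_of_ne h01 h0j
      have hσ : ∀ x, eps n (Equiv.swap i1 j x) = eps n x := by
        intro x
        by_cases hx : x = i0
        · rw [hx, hσ0]
        · have hne : Equiv.swap i1 j x ≠ i0 := by
            intro h
            exact hx (by
              have := (Equiv.swap i1 j).injective (h.trans hσ0.symm)
              exact this)
          rw [hepsne x hx, hepsne _ hne]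
      have h := perm_inv a hlor (Equiv.swap i1 j) hσ i0 i1 i0 i1
      rw [hσ0, Equiv.swap_apply_left] at h
      exact h
  have van3 : ∀ i j k l : Fin n, i ≠ k → j ≠ k → l ≠ k → a i j k l = 0 := by
    intro i j k l h2 h3 h4
    exact vanish_v a hlor k i j k l
      (by rw [if_pos rfl, if_neg h2, if_neg h3, if_neg h4]; norm_num)
  have van4 : ∀ i j k l : Fin n, i ≠ l → j ≠ l → k ≠ l → a i j k l = 0 := by
    intro i j k l h2 h3 h4
    exact vanish_v a hlor l i j k l
      (by rw [if_pos rfl, if_neg h2, if_neg h3, if_neg h4]; norm_num)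
  have hqq : ∀ i j, i ≠ i0 → j ≠ i0 → j ≠ i → a i j i j = -c := by
    intro i j hi hj hji
    have hv1 : a i0 j i j = 0 := van1 i0 j i j hj hi hj
    have hv2 : a i j i0 j = 0 := van3 i j i0 j hi hj hj
    have hb := boost_inv a hlor i0 i j hi0 hi hj hji hv1 hv2
    rw [hq0 j hj] at hb
    linarith
  have hqval : ∀ i j, i ≠ j → a i j i j = -c * eps n i * eps n j := by
    intro i j hij
    by_cases hi : i = i0
    · have hj : j ≠ i0 := fun h => hij (hi.trans h.symm)
      rw [hi, hq0 j hj, heps0, hepsne j hj]; ring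
    · by_cases hj : j = i0
      · have hi' : i ≠ i0 := hi
        rw [hj, qsymm i0 i, hq0 i hi', heps0, hepsne i hi']; ring
      · rw [hqq i j hi hj (fun h => hij h.symm), hepsne i hi, hepsne j hj]; ring
  -- pointwise structure of a
  have key : ∀ i j k l, a i j k l =
      (-2 * c) * ((1/2) * ((if i = k ∧ j = l then eps n i * eps n j else 0)
          + (if i = l ∧ j = k then eps n i * eps n j else 0))
        - (if i = j ∧ k = l then eps n i * eps n k else 0)) := by
    intro i j k l
    by_cases hij : i = j
    · subst hij
      by_cases hkl : k = l
      · subst hkl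
        by_cases hik : i = k
        · subst hik
          rw [if_pos ⟨rfl, rfl⟩, hdiag i]
          ring
        · rw [if_neg (fun h => hik h.1), if_pos ⟨rfl, rfl⟩, hpq i k, hqval i k hik]
          ring
      · -- i = j, k ≠ l : everything vanishes
        have hL : a i i k l = 0 := by
          by_cases hik : i = k
          · subst hik
            exact van4 i i i l hkl hkl hkl
          · by_cases hil : i = l
            · subst hil
              exact van3 i i k i hik hik hik
            · exact van3 i i k l hik hik (fun h => hkl h.symm)
        rw [hL, if_neg (fun h => hkl (h.1.symm.trans h.2)),
          if_neg (fun h => hkl (h.2.symm.trans h.1)), if_neg (fun h => hkl h.2)]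
        ring
    · by_cases hkl : k = l
      · subst hkl
        have hL : a i j k k = 0 := by
          by_cases hik : i = k
          · subst hik
            exact van2 i j i i hij hij hij
          · by_cases hjk : j = k
            · subst hjk
              exact van1 i j j j (fun h => hij h.symm) (fun h => hij h.symm) (fun h => hij h.symm)
            · exact van1 i j k k (fun h => hij h.symm) (fun h => hik h.symm) (fun h => hik h.symm)
        rw [hL, if_neg (fun h => hij (h.1.trans h.2.symm)), if_neg (fun h => hij h.1)]
        ring
      · by_cases hik : i = k
        · subst hik
          by_cases hjl : j = l
          · subst hjl
            rw [if_pos ⟨rfl, rfl⟩, if_neg (fun h : i = j ∧ j = i => hij h.1),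
              if_neg (fun h : i = j ∧ i = j => hij h.1), hqval i j hij]
            ring
          · have hL : a i j i l = 0 := van2 i j i l hij hij (fun h => hjl h.symm)
            rw [hL, if_neg (fun h => hjl h.2), if_neg (fun h : i = l ∧ j = i => hkl h.1),
              if_neg (fun h => hij h.1)]
            ring
        · by_cases hil : i = l
          · subst hil
            by_cases hjk : j = k
            · subst hjk
              rw [(hsym i j j i).2, hqval i j hij, if_neg (fun h : i = j ∧ j = i => hij h.1),
                if_pos ⟨rfl, rfl⟩]
              ring
            · have hL : a i j k i = 0 := van2 i j k i hij (fun h => hjk h.symm) hij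
              rw [hL, if_neg (fun h => hik h.1), if_neg (fun h => hjk h.2),
                if_neg (fun h => hij h.1)]
              ring
          · have hL : a i j k l = 0 :=
              van1 i j k l (fun h => hij h.symm) (fun h => hik h.symm) (fun h => hil h.symm)
            rw [hL, if_neg (fun h => hik h.1), if_neg (fun h => hil h.1),
              if_neg (fun h => hij h.1)]
            ring
  -- final summation
  refine ⟨-2 * c, ?_⟩
  intro w hw
  have S1 : (∑ i, ∑ j, ∑ k, ∑ l,
        (if i = k ∧ j = l then eps n i * eps n j else 0) * w i j k l)
      = ∑ i, ∑ j, eps n i * eps n j * w i j i j := by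
    refine Finset.sum_congr rfl fun i _ => Finset.sum_congr rfl fun j _ => ?_
    rw [sum_single' (fun k => ∑ l, (if i = k ∧ j = l then eps n i * eps n j else 0) * w i j k l) i
      (fun x hx => Finset.sum_eq_zero fun l _ => by simp [Ne.symm hx])]
    beta_reduce
    rw [sum_single' (fun l => (if i = i ∧ j = l then eps n i * eps n j else 0) * w i j i l) j
      (fun y hy => by simp [Ne.symm hy])]
    beta_reduce
    rw [if_pos ⟨rfl, rfl⟩]
  have S2 : (∑ i, ∑ j, ∑ k, ∑ l,
        (if i = l ∧ j = k then eps n i * eps n j else 0) * w i j k l)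
      = ∑ i, ∑ j, eps n i * eps n j * w i j i j := by
    refine Finset.sum_congr rfl fun i _ => Finset.sum_congr rfl fun j _ => ?_
    rw [sum_single' (fun k => ∑ l, (if i = l ∧ j = k then eps n i * eps n j else 0) * w i j k l) j
      (fun x hx => Finset.sum_eq_zero fun l _ => by simp [Ne.symm hx])]
    beta_reduce
    rw [sum_single' (fun l => (if i = l ∧ j = j then eps n i * eps n j else 0) * w i j j l) i
      (fun y hy => by simp [Ne.symm hy])]
    beta_reduce
    rw [if_pos ⟨rfl, rfl⟩, (hw i j j i).2]
  have S3 : (∑ i, ∑ j, ∑ k, ∑ l,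
        (if i = j ∧ k = l then eps n i * eps n k else 0) * w i j k l)
      = ∑ i, ∑ j, eps n i * eps n j * w i i j j := by
    refine Finset.sum_congr rfl fun i _ => ?_
    rw [sum_single' (fun j => ∑ k, ∑ l, (if i = j ∧ k = l then eps n i * eps n k else 0) * w i j k l) i
      (fun x hx => Finset.sum_eq_zero fun k _ => Finset.sum_eq_zero fun l _ => by
        simp [Ne.symm hx])]
    beta_reduce
    refine Finset.sum_congr rfl fun k _ => ?_
    rw [sum_single' (fun l => (if i = i ∧ k = l then eps n i * eps n k else 0) * w i i k l) k
      (fun y hy => by simp [Ne.symm hy])]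
    beta_reduce
    rw [if_pos ⟨rfl, rfl⟩]
  calc (∑ i, ∑ j, ∑ k, ∑ l, a i j k l * w i j k l)
      = ∑ i, ∑ j, ∑ k, ∑ l,
          ((-2 * c) * ((1/2) * ((if i = k ∧ j = l then eps n i * eps n j else 0) * w i j k l
              + (if i = l ∧ j = k then eps n i * eps n j else 0) * w i j k l)
            - (if i = j ∧ k = l then eps n i * eps n k else 0) * w i j k l)) := by
        refine Finset.sum_congr rfl fun i _ => Finset.sum_congr rfl fun j _ =>
          Finset.sum_congr rfl fun k _ => Finset.sum_congr rfl fun l _ => ?_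
        rw [key i j k l]; ring
    _ = (-2 * c) * ((1/2) * ((∑ i, ∑ j, ∑ k, ∑ l,
            (if i = k ∧ j = l then eps n i * eps n j else 0) * w i j k l)
          + ∑ i, ∑ j, ∑ k, ∑ l,
            (if i = l ∧ j = k then eps n i * eps n j else 0) * w i j k l)
        - ∑ i, ∑ j, ∑ k, ∑ l,
            (if i = j ∧ k = l then eps n i * eps n k else 0) * w i j k l) := by
        simp only [Finset.sum_add_distrib, Finset.sum_sub_distrib, ← Finset.mul_sum]
        try ring
    _ = (-2 * c) * ((1/2) * ((∑ i, ∑ j, eps n i * eps n j * w i j i j)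
          + ∑ i, ∑ j, eps n i * eps n j * w i j i j)
        - ∑ i, ∑ j, eps n i * eps n j * w i i j j) := by rw [S1, S2, S3]
    _ = (-2 * c) * ∑ i, ∑ j, eps n i * eps n j * (w i j i j - w i i j j) := by
        have : (∑ i, ∑ j, eps n i * eps n j * (w i j i j - w i i j j))
            = (∑ i, ∑ j, eps n i * eps n j * w i j i j)
              - ∑ i, ∑ j, eps n i * eps n j * w i i j j := by
          rw [← Finset.sum_sub_distrib]
          refine Finset.sum_congr rfl fun i _ => ?_
          rw [← Finset.sum_sub_distrib]
          exact Finset.sum_congr rfl fun j _ => by ring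
        rw [this]; ring

end GeomActions
end
end

section
/- Let n ≥ 1 and let a : Fin n → Fin n → Fin n → Fin n → ℝ satisfy a i j k l = a j i k l = a i j l k, the cyclic identity a i j k l + a i l j k + a i k j l = 0, and the sign-flip invariance: for every m ∈ Fin n, a i j k l = s_m(i) · s_m(j) · s_m(k) · s_m(l) · a i j k l, where s_m(t) = −1 if t = m and s_m(t) = 1 otherwise. Then a r s t u = 0 unless the tuple (r, s, t, u) contains exactly two distinct values of Fin n, each occurring exactly twice. -/
open Matrix

noncomputable section

namespace GeomActions

lemma flip_zero (n : ℕ) (a : Fin n → Fin n → Fin n → Fin n → ℝ)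
    (hflip : ∀ (m : Fin n) (i j k l : Fin n),
      a i j k l = (if i = m then (-1 : ℝ) else 1) * (if j = m then (-1 : ℝ) else 1) *
        (if k = m then (-1 : ℝ) else 1) * (if l = m then (-1 : ℝ) else 1) * a i j k l)
    (r s t u v : Fin n) (hodd : Odd (cnt4 n r s t u v)) : a r s t u = 0 := by
  have e : ∀ w : Fin n, (if w = v then (-1:ℝ) else 1)
      = (-1:ℝ) ^ (if w = v then 1 else 0) := by
    intro w; split <;> simp
  have key : (if r = v then (-1:ℝ) else 1) * (if s = v then (-1:ℝ) else 1) *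
      (if t = v then (-1:ℝ) else 1) * (if u = v then (-1:ℝ) else 1) = -1 := by
    rw [e r, e s, e t, e u, ← pow_add, ← pow_add, ← pow_add]
    have hc : ((if r = v then 1 else 0) + (if s = v then 1 else 0) + (if t = v then 1 else 0)
        + (if u = v then 1 else 0)) = cnt4 n r s t u v := rfl
    rw [hc, hodd.neg_one_pow]
  have h := hflip v r s t u
  rw [key] at h
  linarith

theorem statement8 (n : ℕ) (hn : 1 ≤ n) (a : Fin n → Fin n → Fin n → Fin n → ℝ)
    (hsym : ∀ i j k l, a i j k l = a j i k l ∧ a i j k l = a i j l k)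
    (hcyc : ∀ i j k l, a i j k l + a i l j k + a i k j l = 0)
    (hflip : ∀ (m : Fin n) (i j k l : Fin n),
      a i j k l = (if i = m then (-1 : ℝ) else 1) * (if j = m then (-1 : ℝ) else 1) *
        (if k = m then (-1 : ℝ) else 1) * (if l = m then (-1 : ℝ) else 1) * a i j k l) :
    ∀ r s t u : Fin n,
      (¬ ∃ x y : Fin n, x ≠ y ∧ cnt4 n r s t u x = 2 ∧ cnt4 n r s t u y = 2) →
      a r s t u = 0 := by
  intro r s t u hne
  by_contra ha
  have heven : ∀ v : Fin n, Even (cnt4 n r s t u v) := by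
    intro v
    rcases Nat.even_or_odd (cnt4 n r s t u v) with h | h
    · exact h
    · exact absurd (flip_zero n a hflip r s t u v h) ha
  by_cases hall : s = r ∧ t = r ∧ u = r
  · obtain ⟨h1, h2, h3⟩ := hall
    rw [h1, h2, h3] at ha
    have := hcyc r r r r
    exact ha (by linarith)
  · -- cnt4 r = 2
    have hcr : cnt4 n r s t u r = 2 := by
      obtain ⟨c, hc⟩ := heven r
      unfold cnt4 at hc ⊢
      split_ifs at hc ⊢ <;> first | omega | exact absurd rfl ‹¬ r = r›
    -- pick y ≠ r among s,t,u
    have hy : ∃ y : Fin n, y ≠ r ∧ (y = s ∨ y = t ∨ y = u) := by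
      by_cases hs : s = r
      · by_cases ht : t = r
        · by_cases hu : u = r
          · exact absurd ⟨hs, ht, hu⟩ hall
          · exact ⟨u, hu, Or.inr (Or.inr rfl)⟩
        · exact ⟨t, ht, Or.inr (Or.inl rfl)⟩
      · exact ⟨s, hs, Or.inl rfl⟩
    obtain ⟨y, hyr, hymem⟩ := hy
    have hcy : cnt4 n r s t u y = 2 := by
      obtain ⟨c, hc⟩ := heven y
      unfold cnt4 at hc ⊢
      rcases hymem with h' | h' | h' <;> subst h' <;>
        split_ifs at hc ⊢ <;> first | omega | simp_all
    exact hne ⟨r, y, hyr.symm, hcr, hcy⟩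

end GeomActions
end
end

section
/- Let n ≥ 1, k ≥ 1, and let T : (Fin k → Fin n) → ℝ be a Lorentz-invariant rank-k tensor. Then T I = 0 whenever some value m ∈ Fin n occurs an odd number of times among the entries I 0, …, I (k−1). In particular, if k is odd, then T = 0. -/
open Matrix

noncomputable section

namespace GeomActions

theorem statement9 (n k : ℕ) (hn : 1 ≤ n) (hk : 1 ≤ k) (T : (Fin k → Fin n) → ℝ)
    (hlor : LorentzInvT n k T) :
    (∀ I : Fin k → Fin n,
      (∃ m : Fin n, Odd (Finset.univ.filter (fun r => I r = m)).card) → T I = 0) ∧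
    (Odd k → T = 0) := by
  have main : ∀ I : Fin k → Fin n,
      (∃ m : Fin n, Odd (Finset.univ.filter (fun r => I r = m)).card) → T I = 0 := by
    intro I ⟨m, hm⟩
    set d : Fin n → ℝ := fun i => if i = m then -1 else 1 with hd
    have hd2 : ∀ i, d i * d i = 1 := by
      intro i; simp only [hd]; split <;> norm_num
    have hA : IsLorentz n (Matrix.diagonal d) := by
      unfold IsLorentz etaMat
      rw [Matrix.diagonal_transpose, Matrix.diagonal_mul_diagonal,
        Matrix.diagonal_mul_diagonal]
      have : (fun i => d i * eps n i * d i) = eps n := by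
        funext i; simp only [hd]; split <;> ring
      rw [this]
    have key := hlor (Matrix.diagonal d) hA I
    have hsum : ∑ J : Fin k → Fin n, (∏ r, (Matrix.diagonal d) (I r) (J r)) * T J
        = (∏ r, d (I r)) * T I := by
      rw [Finset.sum_eq_single I]
      · simp [Matrix.diagonal_apply_eq]
      · intro J _ hJ
        obtain ⟨r, hr⟩ : ∃ r, J r ≠ I r := by
          by_contra h; push_neg at h; exact hJ (funext h)
        have : (Matrix.diagonal d) (I r) (J r) = 0 :=
          Matrix.diagonal_apply_ne' d hr
        rw [Finset.prod_eq_zero (Finset.mem_univ r) this, zero_mul]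
      · intro h; exact absurd (Finset.mem_univ I) h
    have hprod : (∏ r, d (I r)) = (-1 : ℝ) ^ (Finset.univ.filter (fun r => I r = m)).card := by
      simp only [hd]
      rw [Finset.prod_ite, Finset.prod_const, Finset.prod_const]
      simp
    rw [hsum, hprod, hm.neg_one_pow] at key
    linarith
  refine ⟨main, fun hk' => ?_⟩
  funext I
  apply main
  by_contra h
  push_neg at h
  have : Even (∑ m : Fin n, (Finset.univ.filter (fun r => I r = m)).card) :=
    Finset.even_sum _ (fun m _ => Nat.not_odd_iff_even.mp (h m))
  rw [← Finset.card_eq_sum_card_fiberwise (f := I) (fun r _ => Finset.mem_univ (I r))] at this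
  simp only [Finset.card_univ, Fintype.card_fin] at this
  exact (Nat.not_even_iff_odd.mpr hk') this

end GeomActions
end
end

section
/- Let n ≥ 2 and let b : Fin n → Fin n → ℝ be a Lorentz-invariant rank-2 tensor. Then there exists c ∈ ℝ such that b i j = c · ε i · (if i = j then 1 else 0) for all i, j (i.e. b is a scalar multiple of the inverse Minkowski form). -/
open Matrix

noncomputable section

namespace GeomActions

lemma lorentz_perm_sign {n : ℕ} (b : Fin n → Fin n → ℝ) (hlor : LorentzInv2 n b)
    (σ : Equiv.Perm (Fin n)) (d : Fin n → ℝ) (hd : ∀ v, d v * d v = 1)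
    (hσ : ∀ v, eps n (σ v) = eps n v) (i j : Fin n) :
    b i j = d i * d j * b (σ i) (σ j) := by
  set A : Matrix (Fin n) (Fin n) ℝ := Matrix.of (fun a c : Fin n => if c = σ a then d a else 0) with hA
  have hL : IsLorentz n A := by
    unfold IsLorentz etaMat
    rw [Matrix.mul_assoc]
    ext a c
    rw [Matrix.mul_apply]
    rw [Finset.sum_eq_single (σ.symm a)]
    · simp only [Matrix.transpose_apply, Matrix.diagonal_mul, hA, Matrix.of_apply,
        Matrix.diagonal_apply, Equiv.apply_symm_apply, if_pos rfl]
      have h1 := hσ (σ.symm a)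
      rw [Equiv.apply_symm_apply] at h1
      by_cases hc : c = a
      · subst hc
        simp only [eq_self_iff_true, if_true]
        have hr : d (σ.symm c) * (eps n (σ.symm c) * d (σ.symm c))
            = eps n (σ.symm c) * (d (σ.symm c) * d (σ.symm c)) := by ring
        rw [hr, hd, mul_one, h1]
      · simp [hc, Ne.symm hc]
    · intro q _ hq
      have : ¬ (a = σ q) := by
        intro h; exact hq (by simp [h])
      simp [hA, this]
    · simp
  have h := hlor A hL i j
  simpa [hA, ite_mul, zero_mul, Finset.sum_ite_eq', mul_comm, mul_assoc, mul_left_comm] using h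

lemma off_diag {n : ℕ} (b : Fin n → Fin n → ℝ) (hlor : LorentzInv2 n b)
    {i j : Fin n} (hij : i ≠ j) : b i j = 0 := by
  have h := lorentz_perm_sign b hlor 1 (fun v => if v = i then -1 else 1)
    (by intro v; by_cases hv : v = i <;> simp [hv]) (by intro v; rfl) i j
  simp [Equiv.Perm.one_apply, Ne.symm hij] at h
  linarith

lemma diag_boost {n : ℕ} (hn : 2 ≤ n) (b : Fin n → Fin n → ℝ) (hlor : LorentzInv2 n b) :
    b ⟨1, by omega⟩ ⟨1, by omega⟩ = - b ⟨0, by omega⟩ ⟨0, by omega⟩ := by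
  set i0 : Fin n := ⟨0, by omega⟩ with hi0
  set i1 : Fin n := ⟨1, by omega⟩ with hi1
  have h01 : i0 ≠ i1 := by simp [hi0, hi1, Fin.ext_iff]
  have heps0 : eps n i0 = -1 := by simp [eps, hi0]
  have heps1 : eps n i1 = 1 := by simp [eps, hi1]
  set A : Matrix (Fin n) (Fin n) ℝ := Matrix.of (fun a c =>
    if a = i0 then (if c = i0 then (5:ℝ)/4 else if c = i1 then 3/4 else 0)
    else if a = i1 then (if c = i0 then 3/4 else if c = i1 then 5/4 else 0)
    else if a = c then 1 else 0) with hA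
  have hcol0 : ∀ q, A q i0 = (5/4)*(if q = i0 then (1:ℝ) else 0) + (3/4)*(if q = i1 then 1 else 0) := by
    intro q
    by_cases h0 : q = i0
    · simp [hA, h0, h01, h01.symm]
    · by_cases h1 : q = i1
      · simp [hA, h0, h1, h01, h01.symm]
      · simp [hA, h0, h1]
  have hcol1 : ∀ q, A q i1 = (3/4)*(if q = i0 then (1:ℝ) else 0) + (5/4)*(if q = i1 then 1 else 0) := by
    intro q
    by_cases h0 : q = i0
    · simp [hA, h0, h01, h01.symm]
    · by_cases h1 : q = i1
      · simp [hA, h0, h1, h01, h01.symm]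
      · simp [hA, h0, h1]
  have hcol : ∀ q c, c ≠ i0 → c ≠ i1 → A q c = if q = c then (1:ℝ) else 0 := by
    intro q c hc0 hc1
    by_cases h0 : q = i0
    · simp [hA, h0, Ne.symm hc0, hc0, hc1]
    · by_cases h1 : q = i1
      · simp [hA, h0, h1, Ne.symm hc1, hc0, hc1]
      · simp [hA, h0, h1]
  have hL : IsLorentz n A := by
    unfold IsLorentz etaMat
    rw [Matrix.mul_assoc]
    ext a c
    rw [Matrix.mul_apply]
    simp only [Matrix.transpose_apply, Matrix.diagonal_mul, Matrix.diagonal_apply]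
    by_cases ha0 : a = i0
    · by_cases hc0 : c = i0
      · subst ha0; subst hc0
        simp [hcol0, add_mul, mul_add, ite_mul, mul_ite, Finset.sum_add_distrib,
          Finset.sum_ite_eq', heps0, heps1, h01, h01.symm, Matrix.diagonal_apply]
        norm_num
      · by_cases hc1 : c = i1
        · subst ha0; subst hc1
          simp [hcol0, hcol1, add_mul, mul_add, ite_mul, mul_ite, Finset.sum_add_distrib,
            Finset.sum_ite_eq', heps0, heps1, h01, h01.symm, Matrix.diagonal_apply]
          norm_num
        · subst ha0
          simp [hcol0, hcol _ _ hc0 hc1, add_mul, mul_add, ite_mul, mul_ite,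
            Finset.sum_add_distrib, Finset.sum_ite_eq', heps0, heps1, h01, h01.symm,
            Ne.symm hc0, Ne.symm hc1, hc0, hc1, Matrix.diagonal_apply]
    · by_cases ha1 : a = i1
      · by_cases hc0 : c = i0
        · subst ha1; subst hc0
          simp [hcol0, hcol1, add_mul, mul_add, ite_mul, mul_ite, Finset.sum_add_distrib,
            Finset.sum_ite_eq', heps0, heps1, h01, h01.symm, Matrix.diagonal_apply]
          norm_num
        · by_cases hc1 : c = i1
          · subst ha1; subst hc1
            simp [hcol1, add_mul, mul_add, ite_mul, mul_ite, Finset.sum_add_distrib,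
              Finset.sum_ite_eq', heps0, heps1, h01, h01.symm, Matrix.diagonal_apply]
            norm_num
          · subst ha1
            simp [hcol1, hcol _ _ hc0 hc1, add_mul, mul_add, ite_mul, mul_ite,
              Finset.sum_add_distrib, Finset.sum_ite_eq', heps0, heps1, h01, h01.symm,
              Ne.symm hc0, Ne.symm hc1, hc0, hc1, Matrix.diagonal_apply]
      · by_cases hc0 : c = i0
        · subst hc0
          simp [hcol0, hcol, add_mul, mul_add, ite_mul, mul_ite, Finset.sum_add_distrib,
            Finset.sum_ite_eq', heps0, heps1, ha0, ha1, Ne.symm ha0, Ne.symm ha1,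
            Matrix.diagonal_apply]
        · by_cases hc1 : c = i1
          · subst hc1
            simp [hcol1, hcol, add_mul, mul_add, ite_mul, mul_ite, Finset.sum_add_distrib,
              Finset.sum_ite_eq', heps0, heps1, ha0, ha1, Ne.symm ha0, Ne.symm ha1,
              Matrix.diagonal_apply]
          · simp only [hcol _ _ ha0 ha1, hcol _ _ hc0 hc1, ite_mul, one_mul, zero_mul,
              mul_ite, mul_one, mul_zero, Matrix.diagonal_apply]
            by_cases hac : a = c
            · subst hac
              simp [Finset.sum_ite_eq']
            · rw [if_neg hac]
              rw [Finset.sum_eq_zero]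
              intro q _
              by_cases hqa : q = a
              · simp [hqa, fun h => hac (hqa ▸ h : a = c), hac]
              · simp [hqa]
  have hrow : ∀ p, A i0 p = (5/4)*(if p = i0 then (1:ℝ) else 0) + (3/4)*(if p = i1 then 1 else 0) := by
    intro p
    by_cases h0 : p = i0
    · simp [hA, h0, h01, h01.symm]
    · by_cases h1 : p = i1
      · simp [hA, h0, h1, h01, h01.symm]
      · simp [hA, h0, h1]
  have h := hlor A hL i0 i0
  have h01' : b i0 i1 = 0 := off_diag b hlor h01
  have h10' : b i1 i0 = 0 := off_diag b hlor (Ne.symm h01)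
  simp only [hrow, add_mul, mul_add, ite_mul, mul_ite, zero_mul, mul_zero, zero_add, add_zero,
    Finset.sum_add_distrib, Finset.sum_ite_eq', Finset.mem_univ, if_true, one_mul, mul_one] at h
  rw [h01', h10'] at h
  linarith

theorem statement10 (n : ℕ) (hn : 2 ≤ n) (b : Fin n → Fin n → ℝ)
    (hlor : LorentzInv2 n b) :
    ∃ c : ℝ, ∀ i j, b i j = c * eps n i * (if i = j then 1 else 0) := by
  set i0 : Fin n := ⟨0, by omega⟩ with hi0
  set i1 : Fin n := ⟨1, by omega⟩ with hi1
  refine ⟨b i1 i1, fun i j => ?_⟩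
  by_cases hij : i = j
  · subst hij
    rw [if_pos rfl, mul_one]
    by_cases h0 : (i : ℕ) = 0
    · have : i = i0 := by simp [hi0, Fin.ext_iff, h0]
      subst this
      have hb : b i1 i1 = - b i0 i0 := diag_boost hn b hlor
      have heps0 : eps n i0 = -1 := by simp [eps, hi0]
      rw [heps0]
      linarith
    · have heps : eps n i = 1 := by simp [eps, h0]
      rw [heps, mul_one]
      by_cases h1 : i = i1
      · rw [h1]
      · have hne1 : (i1 : ℕ) ≠ 0 := by simp [hi1]
        have key := lorentz_perm_sign b hlor (Equiv.swap i i1) 1 (by intro v; norm_num)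
          (fun v => ?_) i i
        · simp only [Pi.one_apply, one_mul, Equiv.swap_apply_left] at key
          rw [key]
        · by_cases hv : v = i
          · simp [hv, Equiv.swap_apply_left, eps, h0, hne1]
          · by_cases hv' : v = i1
            · simp [hv', Equiv.swap_apply_right, eps, h0, hne1]
            · rw [Equiv.swap_apply_of_ne_of_ne hv hv']
  · rw [if_neg hij, mul_zero]
    exact off_diag b hlor hij


end GeomActions
end
end

section
/- Let n ≥ 3 and let a : Fin n → Fin n → Fin n → Fin n → ℝ satisfy a i j k l = a j i k l = a i j l k, the cyclic identity a i j k l + a i l j k + a i k j l = 0, and Lorentz invariance as a rank-4 tensor. Then there exists λ ∈ ℝ such that a i i j j = λ · ε i · ε j for all i ≠ j. -/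
open Matrix

noncomputable section

namespace GeomActions

/-!
Permutations of the spatial axes are Lorentz matrices, so `a x x y y` takes one value `λ` on
all pairs of distinct spatial indices. A boost in the `(0, k)`-plane shows that replacing a pair
of time indices `0 0` by a pair of spatial indices `k k` flips the sign of `a`; hence
`a 0 0 j j = a j j 0 0 = -λ` for spatial `j`.
-/

section LorentzInvariance

variable {n : ℕ}

lemma LorentzInv4.apply_eq_iterated_sum {a : Fin n → Fin n → Fin n → Fin n → ℝ}
    (hlor : LorentzInv4 n a) {A : Matrix (Fin n) (Fin n) ℝ} (hA : IsLorentz n A) (i j k l : Fin n) :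
    a i j k l = ∑ p, A i p * ∑ q, A j q * ∑ r, A k r * ∑ s, A l s * a p q r s := by
  rw [hlor A hA]
  simp only [Finset.mul_sum, mul_assoc]

lemma permMatrix_row_sum (σ : Equiv.Perm (Fin n)) (m : Fin n) (g : Fin n → ℝ) :
    ∑ p, σ.permMatrix ℝ m p * g p = g (σ m) := by
  simp

variable [NeZero n]

lemma eps_zero : eps n 0 = -1 := by
  simp [eps]

lemma eps_of_ne_zero {i : Fin n} (hi : i ≠ 0) : eps n i = 1 := by
  simp [eps, Fin.val_eq_zero_iff, hi]

lemma exists_ne_zero_ne (hn : 3 ≤ n) (j : Fin n) : ∃ k : Fin n, k ≠ 0 ∧ k ≠ j := by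
  by_contra! h
  have hsub : (Finset.univ : Finset (Fin n)) ⊆ {0, j} := fun k _ => by
    by_cases hk : k = 0
    · simp [hk]
    · simp [h k hk]
  have := (Finset.card_le_card hsub).trans Finset.card_le_two
  simp only [Finset.card_univ, Fintype.card_fin] at this
  omega

lemma exists_perm_fix_zero_map_pair {x y x' y' : Fin n} (hx : x ≠ 0) (hy : y ≠ 0)
    (hxy : x ≠ y) (hx' : x' ≠ 0) (hy' : y' ≠ 0) (hxy' : x' ≠ y') :
    ∃ σ : Equiv.Perm (Fin n), σ 0 = 0 ∧ σ x = x' ∧ σ y = y' := by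
  set b := Equiv.swap x x' y
  have hb0 : b ≠ 0 := by
    rw [← (Equiv.swap x x').apply_eq_iff_eq.ne, Equiv.swap_apply_of_ne_of_ne hx.symm hx'.symm] at hy
    exact hy
  have hbx' : b ≠ x' := by
    rw [← Equiv.swap_apply_left x x', (Equiv.swap x x').apply_eq_iff_eq.ne]
    exact hxy.symm
  refine ⟨Equiv.swap b y' * Equiv.swap x x', ?_, ?_, ?_⟩ <;> simp only [Equiv.Perm.mul_apply]
  · rw [Equiv.swap_apply_of_ne_of_ne hx.symm hx'.symm,
      Equiv.swap_apply_of_ne_of_ne hb0.symm hy'.symm]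
  · rw [Equiv.swap_apply_left, Equiv.swap_apply_of_ne_of_ne hbx'.symm hxy']
  · exact Equiv.swap_apply_left b y'

lemma isLorentz_permMatrix {σ : Equiv.Perm (Fin n)} (h0 : σ 0 = 0) :
    IsLorentz n (σ.permMatrix ℝ) := by
  have heps : eps n ∘ σ.symm = eps n := by
    ext i
    by_cases hi : i = 0
    · rw [Function.comp_apply, hi, σ.symm_apply_eq.mpr h0.symm]
    · have : σ.symm i ≠ 0 := by rwa [Ne, Equiv.symm_apply_eq, h0]
      simp [eps_of_ne_zero hi, eps_of_ne_zero this]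
  rw [IsLorentz, transpose_permMatrix, Equiv.Perm.permMatrix, Equiv.Perm.permMatrix,
    PEquiv.toMatrix_toPEquiv_mul, PEquiv.mul_toMatrix_toPEquiv, etaMat, Matrix.submatrix_submatrix]
  simp [heps]

lemma LorentzInv4.apply_perm {a : Fin n → Fin n → Fin n → Fin n → ℝ} (hlor : LorentzInv4 n a)
    {σ : Equiv.Perm (Fin n)} (h0 : σ 0 = 0) (i j k l : Fin n) :
    a (σ i) (σ j) (σ k) (σ l) = a i j k l := by
  rw [hlor.apply_eq_iterated_sum (isLorentz_permMatrix h0) i j k l]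
  simp only [permMatrix_row_sum]

def boost (k : Fin n) (c s : ℝ) : Matrix (Fin n) (Fin n) ℝ :=
  Matrix.of fun p q =>
    if p = q then (if p = 0 ∨ p = k then c else 1)
    else if p = 0 ∧ q = k ∨ p = k ∧ q = 0 then s else 0

variable {k : Fin n} {c s : ℝ}

lemma boost_transpose : (boost k c s)ᵀ = boost k c s := by
  ext p q
  by_cases hpq : p = q
  · simp [boost, hpq]
  · simp only [boost, Matrix.transpose_apply, Matrix.of_apply, hpq, Ne.symm hpq, if_false]
    congr 1
    exact propext (by tauto)

lemma boost_row_sum_zero (hk : k ≠ 0) (g : Fin n → ℝ) :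
    ∑ p, boost k c s 0 p * g p = c * g 0 + s * g k := by
  rw [Fintype.sum_eq_add 0 k hk.symm]
  · simp [boost, hk, hk.symm]
  · rintro p ⟨hp0, hpk⟩
    simp [boost, Ne.symm hp0, hp0, hpk]

lemma boost_row_sum_self (hk : k ≠ 0) (g : Fin n → ℝ) :
    ∑ p, boost k c s k p * g p = s * g 0 + c * g k := by
  rw [Fintype.sum_eq_add 0 k hk.symm]
  · simp [boost, hk, hk.symm]
  · rintro p ⟨hp0, hpk⟩
    simp [boost, Ne.symm hpk, hp0, hpk]

lemma boost_row_sum_of_ne {m : Fin n} (hm0 : m ≠ 0) (hmk : m ≠ k) (g : Fin n → ℝ) :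
    ∑ p, boost k c s m p * g p = g m := by
  rw [Fintype.sum_eq_single m]
  · simp [boost, hm0, hmk]
  · intro p hpm
    simp [boost, Ne.symm hpm, hm0, hmk]

lemma isLorentz_boost (hk : k ≠ 0) (hcs : c ^ 2 - s ^ 2 = 1) : IsLorentz n (boost k c s) := by
  ext i j
  rw [boost_transpose, etaMat, Matrix.mul_assoc, Matrix.mul_apply]
  simp only [Matrix.diagonal_mul]
  obtain rfl | hi0 := eq_or_ne i 0
  · rw [boost_row_sum_zero hk]
    obtain rfl | hj0 := eq_or_ne j 0
    · simp [boost, hk, hk.symm, eps_zero, eps_of_ne_zero hk]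
      linear_combination -hcs
    obtain rfl | hjk := eq_or_ne j k
    · simp [boost, hk, hk.symm, eps_zero, eps_of_ne_zero hk]
      ring
    · simp [boost, hk, hk.symm, hj0, hjk, hj0.symm, hjk.symm]
  obtain rfl | hik := eq_or_ne i k
  · rw [boost_row_sum_self hi0]
    obtain rfl | hj0 := eq_or_ne j 0
    · simp [boost, hi0, hi0.symm, eps_zero, eps_of_ne_zero hi0]
      ring
    obtain rfl | hjk := eq_or_ne j i
    · simp [boost, hi0, hi0.symm, eps_zero, eps_of_ne_zero hi0]
      linear_combination hcs
    · simp [boost, hi0, hj0, hjk, hj0.symm, hjk.symm]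
  · rw [boost_row_sum_of_ne hi0 hik]
    obtain rfl | hij := eq_or_ne j i
    · simp [boost, hi0, hik]
    · simp [boost, hi0, hik, Ne.symm hij]

section Boosts

variable {a : Fin n → Fin n → Fin n → Fin n → ℝ} (hlor : LorentzInv4 n a) (hk : k ≠ 0)
  {x y : Fin n} (hx0 : x ≠ 0) (hxk : x ≠ k) (hy0 : y ≠ 0) (hyk : y ≠ k)
include hlor hk hx0 hxk hy0 hyk

/- Averaging invariance under the boosts with `c = √2`, `s = ±1` cancels the cross terms with
one index `0` and one index `k`, leaving `a x y 0 0 = 2 a x y 0 0 + a x y k k`. -/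

lemma LorentzInv4.apply_zero_zero_right : a x y 0 0 = -a x y k k := by
  have hc : √2 ^ 2 = 2 := Real.sq_sqrt (by norm_num)
  have hpos := hlor.apply_eq_iterated_sum
    (isLorentz_boost (s := 1) hk (by rw [hc]; norm_num)) x y 0 0
  have hneg := hlor.apply_eq_iterated_sum
    (isLorentz_boost (s := -1) hk (by rw [hc]; norm_num)) x y 0 0
  simp only [boost_row_sum_zero hk, boost_row_sum_of_ne hx0 hxk, boost_row_sum_of_ne hy0 hyk]
    at hpos hneg
  linear_combination (-1 / 2 : ℝ) * (hpos + hneg) - a x y 0 0 * hc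

lemma LorentzInv4.apply_zero_zero_left : a 0 0 x y = -a k k x y := by
  have hc : √2 ^ 2 = 2 := Real.sq_sqrt (by norm_num)
  have hpos := hlor.apply_eq_iterated_sum
    (isLorentz_boost (s := 1) hk (by rw [hc]; norm_num)) 0 0 x y
  have hneg := hlor.apply_eq_iterated_sum
    (isLorentz_boost (s := -1) hk (by rw [hc]; norm_num)) 0 0 x y
  simp only [boost_row_sum_zero hk, boost_row_sum_of_ne hx0 hxk, boost_row_sum_of_ne hy0 hyk]
    at hpos hneg
  linear_combination (-1 / 2 : ℝ) * (hpos + hneg) - a 0 0 x y * hc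

end Boosts

end LorentzInvariance

theorem statement11_general (n : ℕ) (hn : 3 ≤ n) (a : Fin n → Fin n → Fin n → Fin n → ℝ)
    (hlor : LorentzInv4 n a) :
    ∃ lam : ℝ, ∀ i j, i ≠ j → a i i j j = lam * eps n i * eps n j := by
  have : NeZero n := ⟨by omega⟩
  obtain ⟨k₁, hk₁, -⟩ := exists_ne_zero_ne hn 0
  obtain ⟨k₂, hk₂, hk₂₁⟩ := exists_ne_zero_ne hn k₁
  have hspatial : ∀ x y : Fin n, x ≠ 0 → y ≠ 0 → x ≠ y → a x x y y = a k₁ k₁ k₂ k₂ := by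
    intro x y hx hy hxy
    obtain ⟨σ, hσ0, hσx, hσy⟩ := exists_perm_fix_zero_map_pair hk₁ hk₂ hk₂₁.symm hx hy hxy
    rw [← hσx, ← hσy, hlor.apply_perm hσ0]
  refine ⟨a k₁ k₁ k₂ k₂, fun i j hij => ?_⟩
  obtain rfl | hi := eq_or_ne i 0
  · obtain ⟨k, hk, hkj⟩ := exists_ne_zero_ne hn j
    have hj : j ≠ 0 := hij.symm
    rw [hlor.apply_zero_zero_left hk hj hkj.symm hj hkj.symm, hspatial k j hk hj hkj, eps_zero,
      eps_of_ne_zero hj]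
    ring
  obtain rfl | hj := eq_or_ne j 0
  · obtain ⟨k, hk, hki⟩ := exists_ne_zero_ne hn i
    rw [hlor.apply_zero_zero_right hk hi hki.symm hi hki.symm, hspatial i k hi hk hki.symm,
      eps_zero, eps_of_ne_zero hi]
    ring
  rw [hspatial i j hi hj hij, eps_of_ne_zero hi, eps_of_ne_zero hj]
  ring

theorem statement11 (n : ℕ) (hn : 3 ≤ n) (a : Fin n → Fin n → Fin n → Fin n → ℝ)
    (hsym : ∀ i j k l, a i j k l = a j i k l ∧ a i j k l = a i j l k)
    (hcyc : ∀ i j k l, a i j k l + a i l j k + a i k j l = 0)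
    (hlor : LorentzInv4 n a) :
    ∃ lam : ℝ, ∀ i j, i ≠ j → a i i j j = lam * eps n i * eps n j :=
  statement11_general n hn a hlor

end GeomActions
end
end

section
/- Let n ≥ 1 and let γ : Fin n → Fin n → Fin n → Fin n → ℝ satisfy γ q r s t = γ r q s t = γ q r t s for all indices. Suppose that: (i) Σ_{q,r,s,t} γ q r s t · c q r s t = 0 for every c : Fin n → Fin n → Fin n → Fin n → ℝ that is symmetric under all permutations of its last three arguments; and (ii) Σ_{q,r,s,t} γ q r s t · (Σ_a ε a · b a q s · b a r t) = 0 for every b : Fin n → Fin n → Fin n → ℝ with b a p q = b a q p. Then γ = 0. -/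
open Matrix

noncomputable section

namespace GeomActions

theorem statement16 (n : ℕ) (hn : 1 ≤ n) (γ : Fin n → Fin n → Fin n → Fin n → ℝ)
    (hsym : ∀ q r s t, γ q r s t = γ r q s t ∧ γ q r s t = γ q r t s)
    (h1 : ∀ c : Fin n → Fin n → Fin n → Fin n → ℝ, Sym3Last n c →
      (∑ q, ∑ r, ∑ s, ∑ t, γ q r s t * c q r s t) = 0)
    (h2 : ∀ b : Fin n → Fin n → Fin n → ℝ, (∀ a p q, b a p q = b a q p) →
      (∑ q, ∑ r, ∑ s, ∑ t, γ q r s t * ∑ a, eps n a * b a q s * b a r t) = 0) :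
    γ = 0 := by
  have hB : ∀ w x y z : Fin n,
      γ w x y z + γ w x z y + γ w y x z + γ w y z x + γ w z x y + γ w z y x = 0 := by
    intro w x y z
    have := h1 (fun i j k l =>
      (if i = w then (1:ℝ) else 0) *
        ((if j = x then (1:ℝ) else 0) * (if k = y then (1:ℝ) else 0) * (if l = z then (1:ℝ) else 0)
        + (if j = x then (1:ℝ) else 0) * (if k = z then (1:ℝ) else 0) * (if l = y then (1:ℝ) else 0)
        + (if j = y then (1:ℝ) else 0) * (if k = x then (1:ℝ) else 0) * (if l = z then (1:ℝ) else 0)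
        + (if j = y then (1:ℝ) else 0) * (if k = z then (1:ℝ) else 0) * (if l = x then (1:ℝ) else 0)
        + (if j = z then (1:ℝ) else 0) * (if k = x then (1:ℝ) else 0) * (if l = y then (1:ℝ) else 0)
        + (if j = z then (1:ℝ) else 0) * (if k = y then (1:ℝ) else 0) * (if l = x then (1:ℝ) else 0)))
      (by intro i j k l; constructor <;> ring)
    simp only [mul_add, Finset.sum_add_distrib] at this
    simp only [mul_ite, ite_mul, mul_zero, zero_mul, mul_one, one_mul,
      Finset.sum_ite_eq', Finset.sum_ite_irrel, Finset.sum_const_zero,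
      Finset.mem_univ, if_true] at this
    linarith [this]
  have hP : ∀ w x y z : Fin n, γ w x y z + γ y x w z + γ w z y x + γ y z w x = 0 := by
    intro w x y z
    set a0 : Fin n := ⟨0, hn⟩ with ha0
    have heps : eps n a0 = -1 := by simp [eps, ha0]
    have key : ∀ u v u' v' : Fin n,
        (∑ q, ∑ r, ∑ s, ∑ t, γ q r s t * ∑ a, eps n a *
          ((if a = a0 then (1:ℝ) else 0) *
            ((if q = u then (1:ℝ) else 0) * (if s = v then (1:ℝ) else 0)
             + (if q = v then (1:ℝ) else 0) * (if s = u then (1:ℝ) else 0)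
             + (if q = u' then (1:ℝ) else 0) * (if s = v' then (1:ℝ) else 0)
             + (if q = v' then (1:ℝ) else 0) * (if s = u' then (1:ℝ) else 0))) *
          ((if a = a0 then (1:ℝ) else 0) *
            ((if r = u then (1:ℝ) else 0) * (if t = v then (1:ℝ) else 0)
             + (if r = v then (1:ℝ) else 0) * (if t = u then (1:ℝ) else 0)
             + (if r = u' then (1:ℝ) else 0) * (if t = v' then (1:ℝ) else 0)
             + (if r = v' then (1:ℝ) else 0) * (if t = u' then (1:ℝ) else 0)))) = 0 := by
      intro u v u' v'
      exact h2 (fun a p q => (if a = a0 then (1:ℝ) else 0) *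
        ((if p = u then (1:ℝ) else 0) * (if q = v then (1:ℝ) else 0)
         + (if p = v then (1:ℝ) else 0) * (if q = u then (1:ℝ) else 0)
         + (if p = u' then (1:ℝ) else 0) * (if q = v' then (1:ℝ) else 0)
         + (if p = v' then (1:ℝ) else 0) * (if q = u' then (1:ℝ) else 0)))
        (by intro a p q; ring)
    have E := key w y x z
    have E1 := key w y w y
    have E2 := key x z x z
    simp only [mul_ite, ite_mul, mul_zero, zero_mul, mul_one, one_mul,
      Finset.sum_ite_eq', Finset.sum_ite_irrel, Finset.sum_const_zero,
      Finset.mem_univ, if_true, heps, mul_add, add_mul,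
      Finset.sum_add_distrib, Finset.mul_sum] at E E1 E2
    linarith [E, E1, E2, (hsym x w z y).1, (hsym w x z y).2, (hsym z w x y).1,
      (hsym w z x y).2, (hsym x y z w).1, (hsym y x z w).2, (hsym z y x w).1,
      (hsym y z x w).2]
  funext q r s t
  show γ q r s t = 0
  linarith [hB q r s t, hB r q s t, hB s q r t, hP q r s t, hP q s r t,
    (hsym q r s t).1, (hsym q r s t).2, (hsym q s r t).1, (hsym q s r t).2,
    (hsym q t r s).1, (hsym q t r s).2, (hsym r q s t).1, (hsym r q s t).2,
    (hsym r s q t).1, (hsym r s q t).2, (hsym r t q s).1, (hsym r t q s).2,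
    (hsym s q r t).1, (hsym s q r t).2, (hsym s r q t).1, (hsym s r q t).2,
    (hsym s t q r).1, (hsym s t q r).2, (hsym q s t r).2, (hsym q t s r).2,
    (hsym r s t q).2, (hsym r t s q).2, (hsym s q t r).2, (hsym s r t q).2,
    (hsym s t r q).2, (hsym q r t s).2]


end GeomActions
end
end

section
/- Let n ≥ 2 and let γ : Fin n → Fin n → Fin n → Fin n → ℝ satisfy Σ_{q,r,s,t} γ q r s t · (Σ_a ε a · b a q s · b a r t) = 0 for every b : Fin n → Fin n → Fin n → ℝ with b a p q = b a q p. Then for all u, v ∈ Fin n: γ u u v v + γ u v v u + γ v u u v + γ v v u u = 0. -/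
open Matrix

noncomputable section

namespace GeomActions

theorem statement17 (n : ℕ) (hn : 2 ≤ n) (γ : Fin n → Fin n → Fin n → Fin n → ℝ)
    (h : ∀ b : Fin n → Fin n → Fin n → ℝ, (∀ a p q, b a p q = b a q p) →
      (∑ q, ∑ r, ∑ s, ∑ t, γ q r s t * ∑ a, eps n a * b a q s * b a r t) = 0) :
    ∀ u v : Fin n, γ u u v v + γ u v v u + γ v u u v + γ v v u u = 0 := by
  intro u v
  set w : Fin n := ⟨1, hn⟩ with hw
  have hwε : eps n w = 1 := by simp [eps, hw]
  set X : Fin n → Fin n → ℝ :=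
    fun p q => (if p = u ∧ q = v then (1:ℝ) else 0) + (if p = v ∧ q = u then 1 else 0) with hX
  have key := h (fun a p q => (if a = w then (1:ℝ) else 0) * X p q) ?_
  · have inner : ∀ q r s t : Fin n,
        (∑ a, eps n a * ((if a = w then (1:ℝ) else 0) * X q s) *
          ((if a = w then (1:ℝ) else 0) * X r t)) = X q s * X r t := by
      intro q r s t
      rw [Finset.sum_eq_single w]
      · simp [hwε]
      · intro a _ ha; simp [ha]
      · simp
    simp only [inner] at key
    have expand : ∀ q r s t : Fin n, γ q r s t * (X q s * X r t) =
        γ q r s t * (if q = u ∧ s = v then (1:ℝ) else 0) * (if r = u ∧ t = v then 1 else 0)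
      + γ q r s t * (if q = u ∧ s = v then (1:ℝ) else 0) * (if r = v ∧ t = u then 1 else 0)
      + γ q r s t * (if q = v ∧ s = u then (1:ℝ) else 0) * (if r = u ∧ t = v then 1 else 0)
      + γ q r s t * (if q = v ∧ s = u then (1:ℝ) else 0) * (if r = v ∧ t = u then 1 else 0) := by
      intro q r s t; simp only [hX]; ring
    simp only [expand, Finset.sum_add_distrib] at key
    rw [show γ u u v v + γ u v v u + γ v u u v + γ v v u u =
      (∑ q, ∑ r, ∑ s, ∑ t, γ q r s t * (if q = u ∧ s = v then (1:ℝ) else 0) * (if r = u ∧ t = v then 1 else 0))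
      + (∑ q, ∑ r, ∑ s, ∑ t, γ q r s t * (if q = u ∧ s = v then (1:ℝ) else 0) * (if r = v ∧ t = u then 1 else 0))
      + (∑ q, ∑ r, ∑ s, ∑ t, γ q r s t * (if q = v ∧ s = u then (1:ℝ) else 0) * (if r = u ∧ t = v then 1 else 0))
      + (∑ q, ∑ r, ∑ s, ∑ t, γ q r s t * (if q = v ∧ s = u then (1:ℝ) else 0) * (if r = v ∧ t = u then 1 else 0))
      from by
        congr 1
        congr 1
        congr 1
        all_goals
          simp [ite_and, Finset.sum_ite_eq, Finset.sum_ite_eq', mul_ite, ite_mul]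
      ]
    exact key
  · intro a p q
    simp only [hX]
    rw [add_comm]
    congr 1 <;> simp [and_comm]

end GeomActions
end
end
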